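/- arXiv:1209.6421 — 3 statements merged into one kernel-verified Lean document; each statement's English description precedes it below -/
import Mathlib

section
/- Every subset of 𝒫 that has the Baire property with respect to the Ellentuck topology on 𝒫 is Ramsey. -/
open Set

/-- A candidate pair: a vertex set `x ⊆ ℕ` together with a collection of finite subsets of ℕ. -/
abbrev PPair : Type := Set ℕ × Set (Finset ℕ)

/-- `S` is hereditary: subsets of members are members. -/
def Hereditary (S : Set (Finset ℕ)) : Prop := ∀ u v : Finset ℕ, u ⊆ v → v ∈ S → u ∈ S

/-- `(x, S)` is a polyhedron pair: members of `S` are finite subsets of `x`,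
`S` is hereditary, and `⋃ S = x`. -/
def IsPolyPair (P : PPair) : Prop :=
  (∀ u ∈ P.2, (u : Set ℕ) ⊆ P.1) ∧ Hereditary P.2 ∧ (∀ n ∈ P.1, ∃ u ∈ P.2, n ∈ u)

/-- Members of `𝒫`: polyhedron pairs with infinite vertex set. -/
def InfPoly (P : PPair) : Prop := IsPolyPair P ∧ P.1.Infinite

/-- Members of `𝒜𝒫`: polyhedron pairs with finite vertex set. -/
def FinPoly (P : PPair) : Prop := IsPolyPair P ∧ P.1.Finite

/-- `x ↾ n` : the set of the `n` smallest elements of `x`. -/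
noncomputable def vrestrict (x : Set ℕ) (n : ℕ) : Finset ℕ :=
  (Finset.range n).image (Nat.nth (· ∈ x))

/-- `S ↾ a = {u ∩ a : u ∈ S}`. -/
def frestrict (S : Set (Finset ℕ)) (a : Finset ℕ) : Set (Finset ℕ) :=
  (fun u => u ∩ a) '' S

/-- The `n`-th approximation `r_n(x,S) = (x ↾ n, S ↾ (x ↾ n))`. -/
noncomputable def approx (n : ℕ) (P : PPair) : PPair :=
  (↑(vrestrict P.1 n), frestrict P.2 (vrestrict P.1 n))

/-- `(y,T) ≤ (x,S)` iff `y ⊆ x` and `T ⊆ S`. -/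
def ple (P Q : PPair) : Prop := P.1 ⊆ Q.1 ∧ P.2 ⊆ Q.2

/-- The space `𝒫` of infinite polyhedron pairs. -/
def PolySpace : Type := {P : PPair // InfPoly P}

/-- The Ellentuck neighborhood `[(a,S_a); (A,S_A)]` as a subset of `𝒫`. -/
noncomputable def nbhd (a : PPair) (A : PolySpace) : Set PolySpace :=
  {B | ple B.1 A.1 ∧ ∃ n, approx n B.1 = a}

/-- The Ellentuck topology on `𝒫`, generated by the neighborhoods `[(a,S_a); (A,S_A)]`
with `(a,S_a) ∈ 𝒜𝒫` and `(A,S_A) ∈ 𝒫`. -/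
noncomputable def ellTop : TopologicalSpace PolySpace :=
  TopologicalSpace.generateFrom {s | ∃ a A, FinPoly a ∧ s = nbhd a A}

/-- `𝒳 ⊆ 𝒫` is Ramsey: for every nonempty neighborhood `[(a,S_a);(A,S_A)]` there is
`(B,S_B) ∈ [(a,S_a);(A,S_A)]` with `[(a,S_a);(B,S_B)] ⊆ 𝒳` or `[(a,S_a);(B,S_B)] ∩ 𝒳 = ∅`. -/
def IsRamsey (X : Set PolySpace) : Prop :=
  ∀ (a : PPair) (A : PolySpace), FinPoly a → (nbhd a A).Nonempty →
    ∃ B ∈ nbhd a A, nbhd a B ⊆ X ∨ nbhd a B ∩ X = ∅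

/-- `𝒳` has the Baire property w.r.t. the Ellentuck topology: it is the symmetric
difference of an open set and a meager set. -/
def HasBaireProperty (X : Set PolySpace) : Prop :=
  ∃ U M : Set PolySpace, @IsOpen PolySpace ellTop U ∧ @IsMeagre PolySpace ellTop M ∧
    X = symmDiff U M

section Toolkit

open Finset in
lemma inf_setOf {z : Set ℕ} (hz : z.Infinite) : (setOf (· ∈ z)).Infinite := by
  exact hz

lemma mem_vrestrict {z : Set ℕ} {m e : ℕ} :
    e ∈ vrestrict z m ↔ ∃ i < m, Nat.nth (· ∈ z) i = e := by
  simp [vrestrict]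

lemma vr_subset {z : Set ℕ} (hz : z.Infinite) (m : ℕ) : ↑(vrestrict z m) ⊆ z := by
  intro e he
  rw [Finset.mem_coe, mem_vrestrict] at he
  obtain ⟨i, _, rfl⟩ := he
  exact Nat.nth_mem_of_infinite (inf_setOf hz) i

lemma vr_card {z : Set ℕ} (hz : z.Infinite) (m : ℕ) : (vrestrict z m).card = m := by
  rw [vrestrict, Finset.card_image_of_injective _ (Nat.nth_injective (inf_setOf hz)),
    Finset.card_range]

lemma vr_mono {z : Set ℕ} {m M : ℕ} (h : m ≤ M) : vrestrict z m ⊆ vrestrict z M :=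
  Finset.image_subset_image (by simpa using Finset.range_subset_range.2 h)

/-- `c` is an initial segment of `z`. -/
def SInit (c : Finset ℕ) (z : Set ℕ) : Prop :=
  ↑c ⊆ z ∧ ∀ x ∈ z, x ∉ c → ∀ i ∈ c, i < x

lemma vr_eq_of_sinit {c : Finset ℕ} {z : Set ℕ} (hz : z.Infinite) (h : SInit c z) :
    vrestrict z c.card = c := by
  classical
  have hsub : vrestrict z c.card ⊆ c := by
    intro e he
    rw [mem_vrestrict] at he
    obtain ⟨i, hi, rfl⟩ := he
    by_contra hec
    have hni : Nat.nth (· ∈ z) i ∈ z := Nat.nth_mem_of_infinite (inf_setOf hz) i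
    have hlt : ∀ x ∈ c, x < Nat.nth (· ∈ z) i := h.2 _ hni hec
    have hcsub : c ⊆ Finset.image (Nat.nth (· ∈ z)) (Finset.range i) := by
      intro x hx
      have hxz : x ∈ z := h.1 hx
      have hcx : Nat.nth (· ∈ z) (Nat.count (· ∈ z) x) = x := Nat.nth_count hxz
      refine Finset.mem_image.2 ⟨Nat.count (· ∈ z) x, Finset.mem_range.2 ?_, hcx⟩
      have hxi : Nat.nth (· ∈ z) (Nat.count (· ∈ z) x) < Nat.nth (· ∈ z) i := by
        rw [hcx]; exact hlt x hx
      exact (Nat.nth_lt_nth (inf_setOf hz)).1 hxi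
    have h1 : c.card ≤ i := by
      calc c.card ≤ (Finset.image (Nat.nth (· ∈ z)) (Finset.range i)).card :=
            Finset.card_le_card hcsub
        _ ≤ (Finset.range i).card := Finset.card_image_le
        _ = i := Finset.card_range i
    omega
  exact (Finset.eq_of_subset_of_card_le hsub (by rw [vr_card hz])).symm ▸ rfl

lemma sinit_of_vr_eq {c : Finset ℕ} {z : Set ℕ} (hz : z.Infinite)
    (h : vrestrict z c.card = c) : SInit c z := by
  classical
  constructor
  · rw [← h]; exact vr_subset hz _
  · intro x hx hxc i hic
    obtain ⟨j, hj⟩ : ∃ j, Nat.nth (· ∈ z) j = x := ⟨Nat.count (· ∈ z) x, Nat.nth_count hx⟩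
    have hjc : ¬ j < c.card := fun hj' => hxc (by rw [← h]; exact mem_vrestrict.2 ⟨j, hj', hj⟩)
    rw [← h] at hic
    obtain ⟨i', hi', rfl⟩ := mem_vrestrict.1 hic
    rw [← hj]
    exact (Nat.nth_lt_nth (inf_setOf hz)).2 (by omega)

lemma sinit_vr {z : Set ℕ} (hz : z.Infinite) (m : ℕ) : SInit (vrestrict z m) z :=
  sinit_of_vr_eq hz (by rw [vr_card hz])

lemma filter_le_nth {z : Set ℕ} (hz : z.Infinite) {i M : ℕ} (hiM : i < M) :
    ((vrestrict z M).filter (· ≤ Nat.nth (· ∈ z) i)).card = i + 1 := by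
  classical
  have himg : (vrestrict z M).filter (· ≤ Nat.nth (· ∈ z) i)
      = Finset.image (Nat.nth (· ∈ z)) (Finset.range (i + 1)) := by
    ext x
    simp only [Finset.mem_filter, mem_vrestrict, Finset.mem_image, Finset.mem_range]
    constructor
    · rintro ⟨⟨j, hj, rfl⟩, hle⟩
      have := (Nat.nth_le_nth (inf_setOf hz)).1 hle
      exact ⟨j, by omega, rfl⟩
    · rintro ⟨j, hj, rfl⟩
      exact ⟨⟨j, by omega, rfl⟩, (Nat.nth_le_nth (inf_setOf hz)).2 (by omega)⟩
  rw [himg, Finset.card_image_of_injective _ (Nat.nth_injective (inf_setOf hz)),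
    Finset.card_range]

lemma mem_vr_iff_card {z : Set ℕ} (hz : z.Infinite) {m M e : ℕ} (hm : m ≤ M) :
    e ∈ vrestrict z m ↔ e ∈ vrestrict z M ∧
      ((vrestrict z M).filter (· ≤ e)).card ≤ m := by
  classical
  constructor
  · intro he
    obtain ⟨i, hi, rfl⟩ := mem_vrestrict.1 he
    refine ⟨vr_mono hm he, ?_⟩
    rw [filter_le_nth hz (by omega)]
    omega
  · rintro ⟨he, hcard⟩
    obtain ⟨i, hi, rfl⟩ := mem_vrestrict.1 he
    rw [filter_le_nth hz hi] at hcard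
    exact mem_vrestrict.2 ⟨i, by omega, rfl⟩

lemma vr_agree_of_le {z y : Set ℕ} {m M : ℕ} (hz : z.Infinite) (hy : y.Infinite)
    (h : vrestrict z M = vrestrict y M) (hm : m ≤ M) : vrestrict z m = vrestrict y m := by
  classical
  ext e
  rw [mem_vr_iff_card hz hm, mem_vr_iff_card hy hm, h]

lemma sinit_mono {c : Finset ℕ} {z z' : Set ℕ} (h : SInit c z) (hz' : z' ⊆ z)
    (hc : ↑c ⊆ z') : SInit c z' :=
  ⟨hc, fun x hx hxc i hic => h.2 x (hz' hx) hxc i hic⟩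

lemma sinit_union {c : Finset ℕ} {t : Set ℕ} (hsep : ∀ i ∈ c, ∀ j ∈ t, i < j) :
    SInit c (↑c ∪ t) := by
  refine ⟨Set.subset_union_left, ?_⟩
  rintro x (hx | hx) hxc i hic
  · exact absurd hx hxc
  · exact hsep i hic x hx

lemma sinit_card_subset {b c : Finset ℕ} {z : Set ℕ} (hz : z.Infinite)
    (h1 : SInit b z) (h2 : SInit c z) (hbc : b.card ≤ c.card) : b ⊆ c := by
  rw [← vr_eq_of_sinit hz h1, ← vr_eq_of_sinit hz h2]
  exact vr_mono hbc

lemma sinit_trans {a b : Finset ℕ} {z : Set ℕ} (hab : a ⊆ b) (h1 : SInit a ↑b)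
    (h2 : SInit b z) : SInit a z := by
  refine ⟨(Finset.coe_subset.2 hab).trans h2.1, ?_⟩
  intro x hx hxa i hia
  by_cases hxb : x ∈ b
  · exact h1.2 x hxb hxa i hia
  · exact h2.2 x hx hxb i (hab hia)
end Toolkit
section Galvin

/-- Classical Ellentuck neighborhood: infinite sets with initial segment `c` and tail in `t`. -/
def Ngh (c : Finset ℕ) (t : Set ℕ) : Set (Set ℕ) :=
  {z | z.Infinite ∧ SInit c z ∧ z ⊆ ↑c ∪ t}

/-- Combinatorial openness. -/
def EOpenC (V : Set (Set ℕ)) : Prop :=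
  ∀ y ∈ V, ∃ m, ∀ z : Set ℕ, z.Infinite → z ⊆ y → vrestrict z m = vrestrict y m → z ∈ V

def Accp (V : Set (Set ℕ)) (c : Finset ℕ) (t : Set ℕ) : Prop := Ngh c t ⊆ V

def Rejp (V : Set (Set ℕ)) (c : Finset ℕ) (t : Set ℕ) : Prop :=
  ∀ t' ⊆ t, t'.Infinite → ¬ Accp V c t'

lemma Ngh_mono {c : Finset ℕ} {t t' : Set ℕ} (h : t' ⊆ t) : Ngh c t' ⊆ Ngh c t :=
  fun _ hz => ⟨hz.1, hz.2.1, hz.2.2.trans (Set.union_subset_union_right _ h)⟩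

lemma Accp.mono {V c t t'} (h : Accp V c t) (ht : t' ⊆ t) : Accp V c t' :=
  (Ngh_mono ht).trans h

lemma Rejp.mono {V c t t'} (h : Rejp V c t) (ht : t' ⊆ t) : Rejp V c t' :=
  fun s hs hsi => h s (hs.trans ht) hsi

lemma not_rej {V c t} (h : ¬ Rejp V c t) : ∃ t' ⊆ t, t'.Infinite ∧ Accp V c t' := by
  unfold Rejp at h
  push_neg at h
  exact h

lemma inter_Ioi_infinite {s : Set ℕ} (hs : s.Infinite) (e : ℕ) : (s ∩ Set.Ioi e).Infinite := by
  have : s ∩ Set.Ioi e = s \ Set.Iic e := by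
    ext x; simp [Set.mem_Ioi, Set.mem_Iic, not_le, Set.mem_diff]
  rw [this]
  exact hs.diff (Set.finite_Iic e)

lemma claim2 {V : Set (Set ℕ)} {c : Finset ℕ} {t : Set ℕ} (ht : t.Infinite)
    (hrej : Rejp V c t) :
    ∃ t', t' ⊆ t ∧ t'.Infinite ∧ ∀ e ∈ t', Rejp V (insert e c) t' := by
  by_contra hcon
  push_neg at hcon
  have key : ∀ s : {s : Set ℕ // s ⊆ t ∧ s.Infinite},
      ∃ p : ℕ × {s' : Set ℕ // s' ⊆ t ∧ s'.Infinite},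
        p.1 ∈ s.1 ∧ p.2.1 ⊆ s.1 ∧ (∀ x ∈ p.2.1, p.1 < x) ∧ Accp V (insert p.1 c) p.2.1 := by
    rintro ⟨s, hst, hsi⟩
    obtain ⟨e, hes, hnr⟩ := hcon s hst hsi
    obtain ⟨s'', hs''s, hs''i, hacc⟩ := not_rej hnr
    refine ⟨(e, ⟨s'' ∩ Set.Ioi e, (Set.inter_subset_left.trans hs''s).trans hst,
      inter_Ioi_infinite hs''i e⟩), hes, Set.inter_subset_left.trans hs''s,
      fun x hx => hx.2, hacc.mono Set.inter_subset_left⟩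
  choose F hF1 hF2 hF3 hF4 using key
  let G : ℕ → {s : Set ℕ // s ⊆ t ∧ s.Infinite} := fun n =>
    Nat.rec ⟨t, subset_rfl, ht⟩ (fun _ s => (F s).2) n
  have hGsucc : ∀ n, G (n + 1) = (F (G n)).2 := fun _ => rfl
  set E : ℕ → ℕ := fun n => (F (G n)).1 with hE
  have hEmem : ∀ n, E n ∈ (G n).1 := fun n => hF1 (G n)
  have hGsub : ∀ n, (G (n + 1)).1 ⊆ (G n).1 := fun n => hF2 (G n)
  have hGgt : ∀ n, ∀ x ∈ (G (n + 1)).1, E n < x := fun n => hF3 (G n)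
  have hGacc : ∀ n, Accp V (insert (E n) c) (G (n + 1)).1 := fun n => hF4 (G n)
  have hEmono : StrictMono E := strictMono_nat_of_lt_succ fun n =>
    hGgt n _ (hEmem (n + 1))
  have hGchain : ∀ k j, k ≤ j → (G j).1 ⊆ (G k).1 := by
    intro k j hkj
    induction j with
    | zero => rw [Nat.le_zero.1 hkj]
    | succ j ih =>
      rcases Nat.lt_or_ge k (j + 1) with h | h
      · exact (hGsub j).trans (ih (by omega))
      · have : k = j + 1 := by omega
        rw [this]
  have hsinf : (Set.range E).Infinite := Set.infinite_range_of_injective hEmono.injective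
  have hssub : Set.range E ⊆ t := by
    rintro x ⟨n, rfl⟩
    exact (G n).2.1 (hEmem n)
  refine hrej (Set.range E) hssub hsinf ?_
  rintro z ⟨hzi, hzinit, hzsub⟩
  have hne : (z \ ↑c).Nonempty := (hzi.diff c.finite_toSet).nonempty
  set e := sInf (z \ ↑c) with he_def
  have he : e ∈ z \ ↑c := Nat.sInf_mem hne
  have heE : e ∈ Set.range E := by
    rcases hzsub he.1 with h | h
    · exact absurd h he.2
    · exact h
  obtain ⟨k, hk⟩ := heE
  refine hGacc k ⟨hzi, ⟨?_, ?_⟩, ?_⟩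
  · intro x hx
    rcases Finset.mem_insert.1 (by exact_mod_cast hx) with rfl | hxc
    · rw [hk]; exact he.1
    · exact hzinit.1 hxc
  · intro x hx hxins i hi
    rcases Finset.mem_insert.1 hi with rfl | hic
    · have hxc : x ∉ c := fun hc' => hxins (Finset.mem_insert_of_mem hc')
      have hxe : x ≠ E k := fun hc' => hxins (by rw [hc']; exact Finset.mem_insert_self _ _)
      have h1 : e ≤ x := Nat.sInf_le ⟨hx, hxc⟩
      rw [hk]
      rcases Nat.lt_or_ge e x with h | h
      · exact h
      · exfalso; exact hxe (by omega)
    · exact hzinit.2 x hx (fun hc' => hxins (Finset.mem_insert_of_mem hc')) i hic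
  · intro x hx
    by_cases hxc : x ∈ c
    · exact Or.inl (by exact_mod_cast Finset.mem_insert_of_mem hxc)
    · by_cases hxe : x = E k
      · exact Or.inl (by rw [hxe]; exact_mod_cast Finset.mem_insert_self _ _)
      · rcases hzsub hx with h | h
        · exact absurd h hxc
        · obtain ⟨j, rfl⟩ := h
          refine Or.inr (hGchain (k + 1) j ?_ (hEmem j))
          have h1 : e ≤ E j := Nat.sInf_le ⟨hx, hxc⟩
          have h2 : E k < E j := by
            rcases Nat.lt_or_ge (E k) (E j) with h' | h'
            · exact h'
            · exfalso; exact hxe (by omega)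
          have := hEmono.lt_iff_lt.1 h2
          omega
lemma multi_claim2 {V : Set (Set ℕ)} (D : Finset (Finset ℕ)) {t : Set ℕ} (ht : t.Infinite)
    (hrej : ∀ c ∈ D, Rejp V c t) :
    ∃ t', t' ⊆ t ∧ t'.Infinite ∧ ∀ c ∈ D, ∀ e ∈ t', Rejp V (insert e c) t' := by
  classical
  induction D using Finset.induction generalizing t with
  | empty => exact ⟨t, subset_rfl, ht, by simp⟩
  | insert c D hnotmem ih =>
    obtain ⟨t', ht't, ht'i, ht'⟩ := ih ht (fun c' hc' => hrej c' (Finset.mem_insert_of_mem hc'))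
    obtain ⟨t'', ht''t, ht''i, ht''⟩ :=
      claim2 ht'i ((hrej c (Finset.mem_insert_self _ _)).mono ht't)
    refine ⟨t'', ht''t.trans ht't, ht''i, ?_⟩
    intro c' hc' e he
    rcases Finset.mem_insert.1 hc' with rfl | hc'D
    · exact ht'' e he
    · exact (ht' c' hc'D e (ht''t he)).mono ht''t

lemma galvin {V : Set (Set ℕ)} (hV : EOpenC V) (b : Finset ℕ) (t : Set ℕ)
    (ht : t.Infinite) (hsep : ∀ i ∈ b, ∀ j ∈ t, i < j) :
    ∃ t', t' ⊆ t ∧ t'.Infinite ∧ (Ngh b t' ⊆ V ∨ Ngh b t' ∩ V = ∅) := by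
  classical
  by_cases hrej : Rejp V b t
  case neg =>
    obtain ⟨t', h1, h2, h3⟩ := not_rej hrej
    exact ⟨t', h1, h2, Or.inl h3⟩
  -- rejection branch: build a fusion sequence
  have step : ∀ s : {p : Finset ℕ × Set ℕ // p.2 ⊆ t ∧ p.2.Infinite ∧
        (∀ i ∈ b ∪ p.1, ∀ j ∈ p.2, i < j) ∧
        (∀ c, b ⊆ c → c ⊆ b ∪ p.1 → Rejp V c p.2)},
      ∃ (s' : {p : Finset ℕ × Set ℕ // p.2 ⊆ t ∧ p.2.Infinite ∧
        (∀ i ∈ b ∪ p.1, ∀ j ∈ p.2, i < j) ∧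
        (∀ c, b ⊆ c → c ⊆ b ∪ p.1 → Rejp V c p.2)}) (e : ℕ),
        e ∈ s.1.2 ∧ s'.1.1 = insert e s.1.1 ∧ s'.1.2 ⊆ s.1.2 ∧ (∀ x ∈ s'.1.2, e < x) := by
    rintro ⟨⟨d, s⟩, hst, hsi, hsep', hrej'⟩
    obtain ⟨t', ht's, ht'i, ht'⟩ := multi_claim2 ((b ∪ d).powerset.filter (fun c => b ⊆ c)) hsi
      (fun c hc => by
        rw [Finset.mem_filter, Finset.mem_powerset] at hc
        exact hrej' c hc.2 hc.1)
    set e := sInf t' with he_def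
    have het' : e ∈ t' := Nat.sInf_mem ht'i.nonempty
    have hes : e ∈ s := ht's het'
    have heb : e ∉ b ∪ d := fun hc => lt_irrefl e (hsep' e hc e hes)
    refine ⟨⟨⟨insert e d, t' ∩ Set.Ioi e⟩, (Set.inter_subset_left.trans ht's).trans hst,
      inter_Ioi_infinite ht'i e, ?_, ?_⟩, e, hes, rfl, Set.inter_subset_left.trans ht's, 
      fun x hx => hx.2⟩
    · intro i hi j hj
      rw [Finset.union_insert, Finset.mem_insert] at hi
      rcases hi with rfl | hi
      · exact hj.2
      · exact hsep' i hi j (ht's hj.1)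
    · intro c hbc hcsub
      by_cases hec : e ∈ c
      · have hbce : b ⊆ c.erase e := by
          intro x hx
          refine Finset.mem_erase.2 ⟨?_, hbc hx⟩
          rintro rfl
          exact heb (Finset.mem_union_left _ hx)
        have hceb : c.erase e ⊆ b ∪ d := by
          intro x hx
          rw [Finset.mem_erase] at hx
          have := hcsub hx.2
          rw [Finset.union_insert, Finset.mem_insert] at this
          rcases this with rfl | h
          · exact absurd rfl hx.1
          · exact h
        have := ht' (c.erase e) (Finset.mem_filter.2 ⟨Finset.mem_powerset.2 hceb, hbce⟩) e het'
        rw [Finset.insert_erase hec] at this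
        exact this.mono Set.inter_subset_left
      · have hcbd : c ⊆ b ∪ d := by
          intro x hx
          have := hcsub hx
          rw [Finset.union_insert, Finset.mem_insert] at this
          rcases this with rfl | h
          · exact absurd hx hec
          · exact h
        exact (hrej' c hbc hcbd).mono (Set.inter_subset_left.trans ht's)
  choose Fs Fe hFe hFd hFs hFgt using step
  let G : ℕ → {p : Finset ℕ × Set ℕ // p.2 ⊆ t ∧ p.2.Infinite ∧
        (∀ i ∈ b ∪ p.1, ∀ j ∈ p.2, i < j) ∧
        (∀ c, b ⊆ c → c ⊆ b ∪ p.1 → Rejp V c p.2)} := fun n =>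
    Nat.rec ⟨(∅, t), subset_rfl, ht, by simpa using hsep, fun c hbc hcb => by
      have : c = b := subset_antisymm (by simpa using hcb) hbc
      rw [this]; exact hrej⟩ (fun _ s => Fs s) n
  set E : ℕ → ℕ := fun n => Fe (G n) with hE
  have hGsucc : ∀ n, G (n + 1) = Fs (G n) := fun _ => rfl
  have hEmem : ∀ n, E n ∈ (G n).1.2 := fun n => hFe (G n)
  have hGd : ∀ n, (G (n + 1)).1.1 = insert (E n) (G n).1.1 := fun n => hFd (G n)
  have hGsub : ∀ n, (G (n + 1)).1.2 ⊆ (G n).1.2 := fun n => hFs (G n)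
  have hGgt : ∀ n, ∀ x ∈ (G (n + 1)).1.2, E n < x := fun n => hFgt (G n)
  have hEmono : StrictMono E := strictMono_nat_of_lt_succ fun n =>
    hGgt n _ (hEmem (n + 1))
  have hGchain : ∀ k j, k ≤ j → (G j).1.2 ⊆ (G k).1.2 := by
    intro k j hkj
    induction j with
    | zero => rw [Nat.le_zero.1 hkj]
    | succ j ih =>
      rcases Nat.lt_or_ge k (j + 1) with h | h
      · exact (hGsub j).trans (ih (by omega))
      · have : k = j + 1 := by omega
        rw [this]
  have hGdcomp : ∀ k, (G k).1.1 = (Finset.range k).image E := by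
    intro k
    induction k with
    | zero => simp [G]
    | succ k ih =>
      rw [hGd k, ih, Finset.range_add_one, Finset.image_insert]
  have hEmemk : ∀ k j, k ≤ j → E j ∈ (G k).1.2 := fun k j hkj => hGchain k j hkj (hEmem j)
  refine ⟨Set.range E, ?_, Set.infinite_range_of_injective hEmono.injective, Or.inr ?_⟩
  · rintro x ⟨n, rfl⟩
    exact (G n).2.1 (hEmem n)
  rw [Set.eq_empty_iff_forall_notMem]
  rintro z ⟨⟨hzi, hzinit, hzsub⟩, hzV⟩
  obtain ⟨m₀, hm₀⟩ := hV z hzV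
  set m := max m₀ b.card with hm_def
  set c' := vrestrict z m with hc'_def
  have hc'z : ↑c' ⊆ z := vr_subset hzi m
  have hc'init : SInit c' z := sinit_vr hzi m
  have hc'card : c'.card = m := vr_card hzi m
  have hbc' : b ⊆ c' := sinit_card_subset hzi hzinit hc'init (by omega)
  have hAcc : Accp V c' (z \ ↑c') := by
    rintro z'' ⟨hz''i, hz''init, hz''sub⟩
    have hz''z : z'' ⊆ z := hz''sub.trans (by
      intro x hx
      rcases hx with hx | hx
      · exact hc'z hx
      · exact hx.1)
    have hvr : vrestrict z'' m = vrestrict z m := by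
      have := vr_eq_of_sinit hz''i hz''init
      rw [hc'card] at this
      rw [this]
    exact hm₀ z'' hz''i hz''z (vr_agree_of_le hz''i hzi hvr (le_max_left _ _))
  -- find the stage k capturing c'
  set J : ℕ → ℕ := fun x => sInf {j | E j = x} with hJ
  set k := ((c' \ b).sup J) + 1 with hk_def
  have hc'tail : ∀ x, x ∈ c' → x ∉ b → ∃ j < k, E j = x := by
    intro x hxc hxb
    have hxz : x ∈ z := hc'z hxc
    have hxr : x ∈ Set.range E := by
      rcases hzsub hxz with h | h
      · exact absurd (by exact_mod_cast h) hxb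
      · exact h
    have hne : {j | E j = x}.Nonempty := hxr
    refine ⟨J x, ?_, Nat.sInf_mem hne⟩
    have : J x ≤ (c' \ b).sup J := Finset.le_sup (Finset.mem_sdiff.2 ⟨hxc, hxb⟩)
    omega
  have hc'sub : c' ⊆ b ∪ (G k).1.1 := by
    intro x hx
    by_cases hxb : x ∈ b
    · exact Finset.mem_union_left _ hxb
    · obtain ⟨j, hj, rfl⟩ := hc'tail x hx hxb
      refine Finset.mem_union_right _ ?_
      rw [hGdcomp k]
      exact Finset.mem_image.2 ⟨j, Finset.mem_range.2 hj, rfl⟩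
  have hRejk : Rejp V c' (G k).1.2 := (G k).2.2.2.2 c' hbc' hc'sub
  -- the accepted tail meets stage k
  have hsub3 : (z \ ↑c') \ (E '' Set.Iio k) ⊆ (z \ ↑c') ∩ (G k).1.2 := by
    rintro x ⟨hx1, hx2⟩
    refine ⟨hx1, ?_⟩
    have hxb : x ∉ b := fun h => hx1.2 (by exact_mod_cast hbc' h)
    have hxr : x ∈ Set.range E := by
      rcases hzsub hx1.1 with h | h
      · exact absurd (by exact_mod_cast h) hxb
      · exact h
    obtain ⟨j, rfl⟩ := hxr
    have hjk : ¬ j < k := fun hjk => hx2 ⟨j, hjk, rfl⟩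
    exact hEmemk k j (by omega)
  have hinf3 : ((z \ ↑c') ∩ (G k).1.2).Infinite :=
    ((hzi.diff c'.finite_toSet).diff ((Set.finite_Iio k).image E)).mono hsub3
  exact hRejk _ Set.inter_subset_right hinf3 (hAcc.mono Set.inter_subset_left)
section Fusion

variable {x₀ : Set ℕ} {aF : Finset ℕ} {W : ℕ → Set (Set ℕ)}

lemma multi_handle (hW : ∀ n, EOpenC (W n))
    (hdense : ∀ n c t, aF ⊆ c → SInit aF ↑c → ↑c ⊆ x₀ → t ⊆ x₀ → t.Infinite →
      (∀ i ∈ c, ∀ j ∈ t, i < j) → (Ngh c t ∩ W n).Nonempty)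
    (P : Finset (ℕ × Finset ℕ)) :
    ∀ t, t ⊆ x₀ → t.Infinite →
      (∀ p : ℕ × Finset ℕ, p ∈ P → aF ⊆ p.2 ∧ SInit aF ↑p.2 ∧ ↑p.2 ⊆ x₀ ∧
        (∀ i ∈ p.2, ∀ j ∈ t, i < j)) →
      ∃ t', t' ⊆ t ∧ t'.Infinite ∧ ∀ p ∈ P, Ngh p.2 t' ⊆ W p.1 := by
  classical
  induction P using Finset.induction with
  | empty => exact fun t htx hti _ => ⟨t, subset_rfl, hti, by simp⟩
  | insert q P hnotmem ih =>
    intro t htx hti hval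
    obtain ⟨t', ht't, ht'i, ht'⟩ := ih t htx hti
      (fun p hp => hval p (Finset.mem_insert_of_mem hp))
    obtain ⟨hq1, hq2, hq3, hq4⟩ := hval q (Finset.mem_insert_self _ _)
    have hsep' : ∀ i ∈ q.2, ∀ j ∈ t', i < j := fun i hi j hj => hq4 i hi j (ht't hj)
    obtain ⟨t'', ht''t, ht''i, halt⟩ := galvin (hW q.1) q.2 t' ht'i hsep'
    rcases halt with h | h
    · refine ⟨t'', ht''t.trans ht't, ht''i, ?_⟩
      intro p hp
      rcases Finset.mem_insert.1 hp with rfl | hpP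
      · exact h
      · exact (Ngh_mono ht''t).trans (ht' p hpP)
    · exfalso
      have := hdense q.1 q.2 t'' hq1 hq2 hq3 ((ht''t.trans ht't).trans htx) ht''i
        (fun i hi j hj => hsep' i hi j (ht''t hj))
      rw [h] at this
      exact Set.not_nonempty_empty this

lemma fusion (hW : ∀ n, EOpenC (W n))
    (hdense : ∀ n c t, aF ⊆ c → SInit aF ↑c → ↑c ⊆ x₀ → t ⊆ x₀ → t.Infinite →
      (∀ i ∈ c, ∀ j ∈ t, i < j) → (Ngh c t ∩ W n).Nonempty)
    (haFx : ↑aF ⊆ x₀) (hinitaF : SInit aF x₀)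
    (t₀ : Set ℕ) (ht₀x : t₀ ⊆ x₀) (ht₀i : t₀.Infinite)
    (hsep₀ : ∀ i ∈ aF, ∀ j ∈ t₀, i < j) :
    ∃ t', t' ⊆ t₀ ∧ t'.Infinite ∧ ∀ z ∈ Ngh aF t', ∀ n, z ∈ W n := by
  classical
  have step : ∀ (k : ℕ) (s : {p : Finset ℕ × Set ℕ // ↑p.1 ⊆ t₀ ∧ p.2 ⊆ t₀ ∧ p.2.Infinite ∧
        (∀ i ∈ aF ∪ p.1, ∀ j ∈ p.2, i < j)}),
      ∃ (s' : {p : Finset ℕ × Set ℕ // ↑p.1 ⊆ t₀ ∧ p.2 ⊆ t₀ ∧ p.2.Infinite ∧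
        (∀ i ∈ aF ∪ p.1, ∀ j ∈ p.2, i < j)}) (e : ℕ) (ts : Set ℕ),
        (∀ n ≤ k, ∀ c, aF ⊆ c → c ⊆ aF ∪ s.1.1 → Ngh c ts ⊆ W n) ∧
        ts ⊆ s.1.2 ∧ e ∈ ts ∧ s'.1.1 = insert e s.1.1 ∧
        s'.1.2 = ts ∩ Set.Ioi e ∧ s'.1.2 ⊆ s.1.2 := by
    rintro k ⟨⟨d, s⟩, hdt, hst, hsi, hsep'⟩
    have hval : ∀ p : ℕ × Finset ℕ,
        p ∈ (Finset.range (k+1)) ×ˢ ((aF ∪ d).powerset.filter (fun c => aF ⊆ c)) →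
        aF ⊆ p.2 ∧ SInit aF ↑p.2 ∧ ↑p.2 ⊆ x₀ ∧ (∀ i ∈ p.2, ∀ j ∈ s, i < j) := by
      rintro ⟨n, c⟩ hp
      rw [Finset.mem_product, Finset.mem_filter, Finset.mem_powerset] at hp
      obtain ⟨-, hcsub, hac⟩ := hp
      refine ⟨hac, ⟨by exact_mod_cast hac, ?_⟩, ?_, ?_⟩
      · intro x hx hxa i hi
        have hxc : x ∈ c := by exact_mod_cast hx
        rcases Finset.mem_union.1 (hcsub hxc) with h | h
        · exact absurd h (by exact_mod_cast hxa)
        · -- x ∈ d ⊆ t₀, i ∈ aF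
          exact hsep₀ i hi x (hdt h)
      · intro x hx
        have hxc : x ∈ c := by exact_mod_cast hx
        rcases Finset.mem_union.1 (hcsub hxc) with h | h
        · exact haFx h
        · exact ht₀x (hdt h)
      · intro i hi j hj
        exact hsep' i (Finset.union_subset (Finset.subset_union_left)
          (Finset.subset_union_right) (hcsub hi)) j hj
    obtain ⟨ts, htss, htsi, hts⟩ := multi_handle hW hdense _ s (hst.trans ht₀x) hsi hval
    set e := sInf ts with he_def
    have hets : e ∈ ts := Nat.sInf_mem htsi.nonempty
    refine ⟨⟨⟨insert e d, ts ∩ Set.Ioi e⟩, ?_, (Set.inter_subset_left.trans htss).trans hst,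
      inter_Ioi_infinite htsi e, ?_⟩, e, ts, ?_, htss, hets, rfl, rfl,
      Set.inter_subset_left.trans htss⟩
    · intro x hx
      rcases Finset.mem_insert.1 (by exact_mod_cast hx) with rfl | hxd
      · exact hst (htss hets)
      · exact hdt hxd
    · intro i hi j hj
      rw [Finset.union_insert, Finset.mem_insert] at hi
      rcases hi with rfl | hi
      · exact hj.2
      · exact hsep' i hi j (htss hj.1)
    · intro n hn c hac hcsub
      exact hts (n, c) (Finset.mem_product.2 ⟨Finset.mem_range.2 (by omega),
        Finset.mem_filter.2 ⟨Finset.mem_powerset.2 hcsub, hac⟩⟩)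
  choose Fs Fe Ft hHand hTs hEt hFd hFts hFsub using step
  let G : ℕ → {p : Finset ℕ × Set ℕ // ↑p.1 ⊆ t₀ ∧ p.2 ⊆ t₀ ∧ p.2.Infinite ∧
        (∀ i ∈ aF ∪ p.1, ∀ j ∈ p.2, i < j)} := fun n =>
    Nat.rec ⟨(∅, t₀), by simp, subset_rfl, ht₀i, by simpa using hsep₀⟩ (fun k s => Fs k s) n
  set E : ℕ → ℕ := fun n => Fe n (G n) with hE
  set T : ℕ → Set ℕ := fun n => Ft n (G n) with hT
  have hGsucc : ∀ n, G (n + 1) = Fs n (G n) := fun _ => rfl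
  have hhand : ∀ k, ∀ n ≤ k, ∀ c, aF ⊆ c → c ⊆ aF ∪ (G k).1.1 → Ngh c (T k) ⊆ W n :=
    fun k => hHand k (G k)
  have hTsub : ∀ k, T k ⊆ (G k).1.2 := fun k => hTs k (G k)
  have hETk : ∀ k, E k ∈ T k := fun k => hEt k (G k)
  have hGd : ∀ n, (G (n + 1)).1.1 = insert (E n) (G n).1.1 := fun n => hFd n (G n)
  have hGts : ∀ n, (G (n + 1)).1.2 = T n ∩ Set.Ioi (E n) := fun n => hFts n (G n)
  have hGsub : ∀ n, (G (n + 1)).1.2 ⊆ (G n).1.2 := fun n => hFsub n (G n)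
  have hEmem : ∀ n, E n ∈ (G n).1.2 := fun n => hTsub n (hETk n)
  have hEmono : StrictMono E := strictMono_nat_of_lt_succ fun n => by
    have := hEmem (n + 1)
    rw [hGts n] at this
    exact this.2
  have hGchain : ∀ k j, k ≤ j → (G j).1.2 ⊆ (G k).1.2 := by
    intro k j hkj
    induction j with
    | zero => rw [Nat.le_zero.1 hkj]
    | succ j ih =>
      rcases Nat.lt_or_ge k (j + 1) with h | h
      · exact (hGsub j).trans (ih (by omega))
      · have : k = j + 1 := by omega
        rw [this]
  have hETmem : ∀ k j, k ≤ j → E j ∈ T k := by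
    intro k j hkj
    rcases Nat.eq_or_lt_of_le hkj with rfl | h
    · exact hETk k
    · have h1 : E j ∈ (G (k + 1)).1.2 := hGchain (k + 1) j (by omega) (hEmem j)
      rw [hGts k] at h1
      exact h1.1
  have hGdcomp : ∀ k, (G k).1.1 = (Finset.range k).image E := by
    intro k
    induction k with
    | zero => simp [G]
    | succ k ih => rw [hGd k, ih, Finset.range_add_one, Finset.image_insert]
  refine ⟨Set.range E, ?_, Set.infinite_range_of_injective hEmono.injective, ?_⟩
  · rintro x ⟨n, rfl⟩
    exact (G n).2.2.1 (hEmem n)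
  rintro z ⟨hzi, hzinit, hzsub⟩ n
  set c := (aF ∪ (G n).1.1).filter (· ∈ z) with hc_def
  have hac : aF ⊆ c := by
    intro x hx
    exact Finset.mem_filter.2 ⟨Finset.mem_union_left _ hx, hzinit.1 (by exact_mod_cast hx)⟩
  have hcsub : c ⊆ aF ∪ (G n).1.1 := Finset.filter_subset _ _
  have hzout : ∀ x ∈ z, x ∉ c → x ∈ T n := by
    intro x hx hxc
    have hxnd : x ∉ aF ∪ (G n).1.1 := fun h => hxc (Finset.mem_filter.2 ⟨h, hx⟩)
    have hxr : x ∈ Set.range E := by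
      rcases hzsub hx with h | h
      · exact absurd (by exact_mod_cast h : x ∈ aF)
          (fun h' => hxnd (Finset.mem_union_left _ h'))
      · exact h
    obtain ⟨j, rfl⟩ := hxr
    have hjn : ¬ j < n := by
      intro hjn
      exact hxnd (Finset.mem_union_right _ (by
        rw [hGdcomp n]
        exact Finset.mem_image.2 ⟨j, Finset.mem_range.2 hjn, rfl⟩))
    exact hETmem n j (by omega)
  refine hhand n n le_rfl c hac hcsub ⟨hzi, ⟨?_, ?_⟩, ?_⟩
  · intro x hx
    exact (Finset.mem_filter.1 (by exact_mod_cast hx)).2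
  · intro x hx hxc i hi
    have hxT : x ∈ T n := hzout x hx hxc
    have hxG : x ∈ (G n).1.2 := hTsub n hxT
    exact (G n).2.2.2.2 i (Finset.mem_filter.1 hi).1 x hxG
  · intro x hx
    by_cases hxc : x ∈ c
    · exact Or.inl (by exact_mod_cast hxc)
    · exact Or.inr (hzout x hx hxc)

end Fusion
section Theta

/-- Minimal hereditary family over `a₂` with all singletons from `z`. -/
def Tset (a₂ : Set (Finset ℕ)) (z : Set ℕ) : Set (Finset ℕ) :=
  a₂ ∪ {u | ∃ k ∈ z, u = {k}}

lemma Tset_mono {a₂ : Set (Finset ℕ)} {z z' : Set ℕ} (h : z ⊆ z') :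
    Tset a₂ z ⊆ Tset a₂ z' := by
  rintro u (hu | ⟨k, hk, rfl⟩)
  · exact Or.inl hu
  · exact Or.inr ⟨k, h hk, rfl⟩

lemma theta_poly {a₂ : Set (Finset ℕ)} {aF : Finset ℕ} {z : Set ℕ}
    (h1 : ∀ u ∈ a₂, u ⊆ aF) (hher : Hereditary a₂) (h0 : ∅ ∈ a₂)
    (hz : z.Infinite) (haz : ↑aF ⊆ z) : InfPoly (z, Tset a₂ z) := by
  refine ⟨⟨?_, ?_, ?_⟩, hz⟩
  · rintro u (hu | ⟨k, hk, rfl⟩)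
    · exact fun x hx => haz (h1 u hu hx)
    · simpa using hk
  · rintro u v huv (hv | ⟨k, hk, rfl⟩)
    · exact Or.inl (hher u v huv hv)
    · rcases Finset.subset_singleton_iff.1 huv with rfl | rfl
      · exact Or.inl h0
      · exact Or.inr ⟨k, hk, rfl⟩
  · intro n hn
    exact ⟨{n}, Or.inr ⟨n, hn, rfl⟩, Finset.mem_singleton_self n⟩

lemma frestrict_union (S S' : Set (Finset ℕ)) (e : Finset ℕ) :
    frestrict (S ∪ S') e = frestrict S e ∪ frestrict S' e :=
  Set.image_union _ _ _

lemma frestrict_singletons {z : Set ℕ} {e : Finset ℕ} (hez : ↑e ⊆ z)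
    (hne : (z \ ↑e).Nonempty) :
    frestrict {u | ∃ k ∈ z, u = {k}} e = {u | ∃ k ∈ e, u = {k}} ∪ {∅} := by
  classical
  ext u
  constructor
  · rintro ⟨v, ⟨k, hk, rfl⟩, rfl⟩
    by_cases hke : k ∈ e
    · exact Or.inl ⟨k, hke, by show {k} ∩ e = {k}; rw [Finset.singleton_inter_of_mem hke]⟩
    · refine Or.inr ?_
      show ({k} ∩ e : Finset ℕ) ∈ ({∅} : Set (Finset ℕ))
      rw [Finset.singleton_inter_of_notMem hke]
      rfl
  · rintro (⟨k, hk, rfl⟩ | hu)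
    · exact ⟨{k}, ⟨k, hez hk, rfl⟩, Finset.singleton_inter_of_mem hk⟩
    · obtain ⟨k0, hk0⟩ := hne
      rw [Set.mem_singleton_iff] at hu
      refine ⟨{k0}, ⟨k0, hk0.1, rfl⟩, ?_⟩
      show ({k0} ∩ e : Finset ℕ) = u
      rw [Finset.singleton_inter_of_notMem (fun h => hk0.2 h), hu]

lemma frestrict_Tset {a₂ : Set (Finset ℕ)} {z : Set ℕ} {e : Finset ℕ}
    (hez : ↑e ⊆ z) (hne : (z \ ↑e).Nonempty) :
    frestrict (Tset a₂ z) e = frestrict a₂ e ∪ ({u | ∃ k ∈ e, u = {k}} ∪ {∅}) := by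
  rw [Tset, frestrict_union, frestrict_singletons hez hne]

lemma frestrict_self {a₂ : Set (Finset ℕ)} {aF e : Finset ℕ}
    (h1 : ∀ u ∈ a₂, u ⊆ aF) (haFe : aF ⊆ e) : frestrict a₂ e = a₂ := by
  ext u
  constructor
  · rintro ⟨v, hv, rfl⟩
    show (v ∩ e : Finset ℕ) ∈ a₂
    rwa [Finset.inter_eq_left.2 ((h1 v hv).trans haFe)]
  · intro hu
    exact ⟨u, hu, show (u ∩ e : Finset ℕ) = u from Finset.inter_eq_left.2 ((h1 u hu).trans haFe)⟩

lemma frestrict_Tset_full {a₂ : Set (Finset ℕ)} {aF : Finset ℕ} {z : Set ℕ} {e : Finset ℕ}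
    (h1 : ∀ u ∈ a₂, u ⊆ aF) (h0 : ∅ ∈ a₂) (haFe : aF ⊆ e)
    (hez : ↑e ⊆ z) (hne : (z \ ↑e).Nonempty) :
    frestrict (Tset a₂ z) e = a₂ ∪ {u | ∃ k ∈ e, u = {k}} := by
  rw [frestrict_Tset hez hne, frestrict_self h1 haFe]
  ext u
  simp only [Set.mem_union, Set.mem_setOf_eq, Set.mem_singleton_iff]
  constructor
  · rintro (h | (h | rfl))
    · exact Or.inl h
    · exact Or.inr h
    · exact Or.inl h0
  · rintro (h | h)
    · exact Or.inl h
    · exact Or.inr (Or.inl h)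

lemma finPoly_approx (B : PolySpace) (m : ℕ) : FinPoly (approx m B.1) := by
  obtain ⟨⟨hBsub, hBher, hBcov⟩, hBinf⟩ := B.2
  refine ⟨⟨?_, ?_, ?_⟩, Finset.finite_toSet _⟩
  · rintro u ⟨v, hv, rfl⟩
    intro x hx
    simp only [approx]
    exact_mod_cast (Finset.inter_subset_right : v ∩ _ ⊆ _) hx
  · rintro u v huv ⟨w, hw, rfl⟩
    simp only at huv
    refine ⟨u, hBher u w (huv.trans Finset.inter_subset_left) hw, ?_⟩
    show u ∩ _ = u
    rw [Finset.inter_eq_left.2 (huv.trans Finset.inter_subset_right)]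
  · intro n hn
    simp only [approx, Finset.mem_coe] at hn
    obtain ⟨u, hu, hnu⟩ := hBcov n (vr_subset hBinf m hn)
    exact ⟨u ∩ vrestrict B.1.1 m, ⟨u, hu, rfl⟩, Finset.mem_inter.2 ⟨hnu, by exact_mod_cast hn⟩⟩

end Theta
section MemLemma

lemma mem_nbhd_theta {a₂ : Set (Finset ℕ)} {aF : Finset ℕ} {w : Set ℕ} (hw : w.Infinite)
    {k : ℕ} (haFk : aF ⊆ vrestrict w k)
    (h1a : ∀ u ∈ a₂, u ⊆ aF) (h0 : ∅ ∈ a₂)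
    (hpw : InfPoly (w, Tset a₂ w)) (B' : PolySpace) :
    B' ∈ nbhd (approx k (w, Tset a₂ w)) ⟨(w, Tset a₂ w), hpw⟩ ↔
      B'.1.1.Infinite ∧ B'.1.1 ⊆ w ∧ vrestrict B'.1.1 k = vrestrict w k ∧
        B'.1.2 = Tset a₂ B'.1.1 := by
  obtain ⟨⟨hsub', hher', hcov'⟩, hinf'⟩ := B'.2
  set z := B'.1.1 with hz_def
  set S' := B'.1.2 with hS'_def
  set e := vrestrict w k with he_def
  have hew : ↑e ⊆ w := vr_subset hw k
  have hwene : (w \ ↑e).Nonempty := (hw.diff e.finite_toSet).nonempty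
  have hval : frestrict (Tset a₂ w) e = a₂ ∪ {u | ∃ j ∈ e, u = {j}} :=
    frestrict_Tset_full h1a h0 haFk hew hwene
  constructor
  · rintro ⟨⟨hp1, hp2⟩, m, happ⟩
    have h1 : (↑(vrestrict z m) : Set ℕ) = ↑e := congrArg Prod.fst happ
    have h2 : frestrict S' (vrestrict z m) = frestrict (Tset a₂ w) e := congrArg Prod.snd happ
    have hfeq : vrestrict z m = e := Finset.coe_inj.1 h1
    have hmk : m = k := by
      have := vr_card hinf' m
      rw [hfeq, he_def, vr_card hw k] at this
      exact this.symm
    rw [hfeq, hval] at h2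
    have hzero : ∅ ∈ S' := by
      have : (∅ : Finset ℕ) ∈ frestrict S' e := by rw [h2]; exact Or.inl h0
      obtain ⟨u, hu, -⟩ := this
      exact hher' ∅ u (Finset.empty_subset u) hu
    have hS'T : S' ⊆ Tset a₂ z := by
      intro u hu
      rcases hp2 hu with h | ⟨k0, hk0, rfl⟩
      · exact Or.inl h
      · exact Or.inr ⟨k0, by simpa using hsub' _ hu (Finset.mem_coe.2 (Finset.mem_singleton_self k0)), rfl⟩
    have hTS' : Tset a₂ z ⊆ S' := by
      rintro v (hv | ⟨k0, hk0, rfl⟩)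
      · have : v ∈ frestrict S' e := by rw [h2]; exact Or.inl hv
        obtain ⟨u, hu, hue⟩ := this
        have hue' : u ∩ e = v := hue
        rcases hp2 hu with h | ⟨k1, hk1, rfl⟩
        · rw [Finset.inter_eq_left.2 ((h1a u h).trans haFk)] at hue'
          rwa [← hue']
        · by_cases hk1e : k1 ∈ e
          · rw [Finset.singleton_inter_of_mem hk1e] at hue'
            rwa [← hue']
          · rw [Finset.singleton_inter_of_notMem hk1e] at hue'
            rw [← hue']
            exact hzero
      · obtain ⟨u, hu, hk0u⟩ := hcov' k0 hk0
        exact hher' {k0} u (Finset.singleton_subset_iff.2 hk0u) hu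
    refine ⟨hinf', hp1, ?_, Set.Subset.antisymm hS'T hTS'⟩
    rw [← hmk, hfeq]
  · rintro ⟨hzi, hzw, hvr, hS'⟩
    have hez : ↑e ⊆ z := by
      rw [← hvr]
      exact vr_subset hzi k
    have hzene : (z \ ↑e).Nonempty := (hzi.diff e.finite_toSet).nonempty
    refine ⟨⟨hzw, ?_⟩, k, ?_⟩
    · intro u hu
      have hu' : u ∈ Tset a₂ z := by rw [← hS']; exact hu
      exact Tset_mono hzw hu'
    · simp only [approx]
      have e1 : vrestrict B'.1.1 k = e := hvr
      have e2 : B'.1.2 = Tset a₂ z := hS'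
      rw [e1, e2, ← he_def, hval]
      exact congrArg _ (frestrict_Tset_full h1a h0 haFk hez hzene)

end MemLemma
section OpenStable

lemma open_stable {a₂ : Set (Finset ℕ)} {Wset : Set PolySpace}
    (hgen : TopologicalSpace.GenerateOpen {s | ∃ a' A', FinPoly a' ∧ s = nbhd a' A'} Wset) :
    ∀ (Y : PolySpace) (y : Set ℕ), Y.1 = (y, Tset a₂ y) → Y ∈ Wset →
      ∃ m, ∀ (Z : PolySpace) (z : Set ℕ), Z.1 = (z, Tset a₂ z) → z ⊆ y →
        vrestrict z m = vrestrict y m → Z ∈ Wset := by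
  induction hgen with
  | basic s hs =>
    obtain ⟨a', A', hfa, rfl⟩ := hs
    rintro Y y hY ⟨⟨hp1, hp2⟩, m, happ⟩
    rw [hY] at hp1 hp2 happ
    have hyi : y.Infinite := by
      have := Y.2.2
      rwa [hY] at this
    refine ⟨m, ?_⟩
    rintro Z z hZ hzy hvr
    have hzi : z.Infinite := by
      have := Z.2.2
      rwa [hZ] at this
    refine ⟨⟨?_, ?_⟩, m, ?_⟩
    · rw [hZ]
      exact hzy.trans hp1
    · rw [hZ]
      exact (Tset_mono hzy).trans hp2
    · rw [hZ]
      rw [← happ]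
      simp only [approx]
      have hez : (↑(vrestrict y m) : Set ℕ) ⊆ z := by
        rw [← hvr]
        exact vr_subset hzi m
      have heye : (↑(vrestrict y m) : Set ℕ) ⊆ y := vr_subset hyi m
      have h1 : frestrict (Tset a₂ z) (vrestrict y m) = frestrict (Tset a₂ y) (vrestrict y m) := by
        rw [frestrict_Tset hez ((hzi.diff (vrestrict y m).finite_toSet).nonempty),
          frestrict_Tset heye ((hyi.diff (vrestrict y m).finite_toSet).nonempty)]
      rw [hvr, h1]
  | univ => exact fun Y y hY _ => ⟨0, fun Z z _ _ _ => trivial⟩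
  | inter s t hs ht ihs iht =>
    rintro Y y hY ⟨hYs, hYt⟩
    obtain ⟨m1, h1⟩ := ihs Y y hY hYs
    obtain ⟨m2, h2⟩ := iht Y y hY hYt
    have hyi : y.Infinite := by
      have := Y.2.2
      rwa [hY] at this
    refine ⟨max m1 m2, ?_⟩
    rintro Z z hZ hzy hvr
    have hzi : z.Infinite := by
      have := Z.2.2
      rwa [hZ] at this
    exact ⟨h1 Z z hZ hzy (vr_agree_of_le hzi hyi hvr (le_max_left _ _)),
      h2 Z z hZ hzy (vr_agree_of_le hzi hyi hvr (le_max_right _ _))⟩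
  | sUnion S hS ih =>
    rintro Y y hY ⟨s, hsS, hYs⟩
    obtain ⟨m, h⟩ := ih s hsS Y y hY hYs
    exact ⟨m, fun Z z hZ h1 h2 => ⟨s, hsS, h Z z hZ h1 h2⟩⟩

end OpenStable
/-- Every subset of `𝒫` with the Baire property w.r.t. the Ellentuck topology is Ramsey. -/
theorem baireProperty_isRamsey (X : Set PolySpace) (hX : HasBaireProperty X) :
    IsRamsey X := by
  classical
  letI : TopologicalSpace PolySpace := ellTop
  obtain ⟨U, M, hUopen, hMmeag, hXUM⟩ := hX
  intro a A ha hne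
  obtain ⟨C, ⟨hCv, hCS⟩, n₀, hCn⟩ := hne
  obtain ⟨⟨hCsub, hCher, hCcov⟩, hCinf⟩ := C.2
  set x₀ := C.1.1 with hx₀_def
  set aF := vrestrict x₀ n₀ with haF_def
  set a₂ := a.2 with ha₂_def
  obtain ⟨⟨hasub, haher, hacov⟩, hafin⟩ := ha
  have ha1 : (↑aF : Set ℕ) = a.1 := congrArg Prod.fst hCn
  have haeq : ((↑aF : Set ℕ), a₂) = a := by rw [ha1, ha₂_def]
  have ha2 : frestrict C.1.2 aF = a₂ := congrArg Prod.snd hCn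
  -- basic facts
  have h1a : ∀ u ∈ a₂, u ⊆ aF := by
    intro u hu x hx
    have := hasub u hu (Finset.mem_coe.2 hx)
    rw [← ha1] at this
    exact_mod_cast this
  have ha₂C : a₂ ⊆ C.1.2 := by
    intro v hv
    rw [← ha2] at hv
    obtain ⟨u, hu, rfl⟩ := hv
    exact hCher _ u Finset.inter_subset_left hu
  have h0 : ∅ ∈ a₂ := by
    obtain ⟨k0, hk0⟩ := hCinf.nonempty
    obtain ⟨u, hu, -⟩ := hCcov k0 hk0
    have : u ∩ aF ∈ a₂ := by rw [← ha2]; exact ⟨u, hu, rfl⟩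
    exact haher ∅ (u ∩ aF) (Finset.empty_subset _) this
  have hsing : ∀ k ∈ aF, ({k} : Finset ℕ) ∈ a₂ := by
    intro k hk
    have hk1 : k ∈ a.1 := by rw [← ha1]; exact_mod_cast hk
    obtain ⟨u, hu, hku⟩ := hacov k hk1
    exact haher {k} u (Finset.singleton_subset_iff.2 hku) hu
  obtain ⟨⟨hAsub, hAher, hAcov⟩, hAinf⟩ := A.2
  have hsingA : ∀ k ∈ x₀, ({k} : Finset ℕ) ∈ A.1.2 := by
    intro k hk
    obtain ⟨u, hu, hku⟩ := hAcov k (hCv hk)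
    exact hAher {k} u (Finset.singleton_subset_iff.2 hku) hu
  have haFcard : aF.card = n₀ := vr_card hCinf n₀
  have hinitx₀ : SInit aF x₀ := sinit_vr hCinf n₀
  have haFx : ↑aF ⊆ x₀ := vr_subset hCinf n₀
  -- meager decomposition
  have hMdec : ∃ N : ℕ → Set PolySpace, (∀ n, IsNowhereDense (N n)) ∧ M ⊆ ⋃ n, N n := by
    rw [isMeagre_iff_countable_union_isNowhereDense] at hMmeag
    obtain ⟨Scol, hScol, hScnt, hMsub⟩ := hMmeag
    rcases Scol.eq_empty_or_nonempty with rfl | hS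
    · exact ⟨fun _ => ∅, fun _ => isNowhereDense_empty, by simpa using hMsub⟩
    · obtain ⟨f, rfl⟩ := Set.Countable.exists_eq_range hScnt hS
      exact ⟨f, fun n => hScol _ ⟨n, rfl⟩, by rwa [Set.sUnion_range] at hMsub⟩
  obtain ⟨N, hNnwd, hMN⟩ := hMdec
  set Gd : ℕ → Set PolySpace := fun n => (closure (N n))ᶜ with hGd_def
  have hGopen : ∀ n, IsOpen (Gd n) := fun n => isClosed_closure.isOpen_compl
  have hGdense : ∀ n, Dense (Gd n) := fun n =>
    interior_eq_empty_iff_dense_compl.1 (hNnwd n)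
  -- the combinatorial shadows
  set Y𝒴 : Set (Set ℕ) := {z | z.Infinite ∧ z ⊆ x₀ ∧ vrestrict z n₀ = aF} with hY𝒴_def
  have hmkP : ∀ z ∈ Y𝒴, InfPoly (z, Tset a₂ z) := by
    rintro z ⟨hzi, hzx, hzvr⟩
    refine theta_poly h1a haher h0 hzi ?_
    rw [← hzvr]
    exact vr_subset hzi n₀
  set Ust : Set (Set ℕ) :=
    {z | z ∈ Y𝒴 ∧ ∀ P : PolySpace, P.1 = (z, Tset a₂ z) → P ∈ U} with hUst_def
  set Wst : ℕ → Set (Set ℕ) := fun n =>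
    {z | z ∈ Y𝒴 ∧ ∀ P : PolySpace, P.1 = (z, Tset a₂ z) → P ∈ Gd n} with hWst_def
  -- EOpenC transfer
  have hEO : ∀ (V : Set PolySpace), IsOpen V → EOpenC
      {z | z ∈ Y𝒴 ∧ ∀ P : PolySpace, P.1 = (z, Tset a₂ z) → P ∈ V} := by
    intro V hV y hy
    obtain ⟨⟨hyi, hyx, hyvr⟩, hyV⟩ := hy
    have hgen : TopologicalSpace.GenerateOpen
        {s | ∃ a' A', FinPoly a' ∧ s = nbhd a' A'} V := hV
    obtain ⟨m', hst⟩ := open_stable hgen ⟨(y, Tset a₂ y), hmkP y ⟨hyi, hyx, hyvr⟩⟩ y rfl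
      (hyV _ rfl)
    refine ⟨max m' n₀, ?_⟩
    intro z hzi hzy hvr
    have hz𝒴 : z ∈ Y𝒴 := by
      refine ⟨hzi, hzy.trans hyx, ?_⟩
      rw [vr_agree_of_le hzi hyi hvr (le_max_right _ _), hyvr]
    refine ⟨hz𝒴, ?_⟩
    intro P hP
    exact hst P z hP hzy (vr_agree_of_le hzi hyi hvr (le_max_left _ _))
  have hWEO : ∀ n, EOpenC (Wst n) := fun n => hEO (Gd n) (hGopen n)
  have hUEO : EOpenC Ust := hEO U hUopen
  -- density transfer
  have hWdense : ∀ n c t, aF ⊆ c → SInit aF ↑c → ↑c ⊆ x₀ → t ⊆ x₀ → t.Infinite →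
      (∀ i ∈ c, ∀ j ∈ t, i < j) → (Ngh c t ∩ Wst n).Nonempty := by
    intro n c t hafc hinitc hcx htx hti hsep
    set w : Set ℕ := ↑c ∪ t with hw_def
    have hwi : w.Infinite := hti.mono Set.subset_union_right
    have haFw : ↑aF ⊆ w := fun x hx => Set.subset_union_left (hafc (Finset.mem_coe.1 hx))
    have hpw : InfPoly (w, Tset a₂ w) := theta_poly h1a haher h0 hwi haFw
    have hinitcw : SInit c w := sinit_union hsep
    have hvrc : vrestrict w c.card = c := vr_eq_of_sinit hwi hinitcw
    have haFk : aF ⊆ vrestrict w c.card := by rw [hvrc]; exact hafc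
    set Pw : PolySpace := ⟨(w, Tset a₂ w), hpw⟩ with hPw_def
    set O : Set PolySpace := nbhd (approx c.card Pw.1) Pw with hO_def
    have hOopen : IsOpen O :=
      TopologicalSpace.isOpen_generateFrom_of_mem ⟨approx c.card Pw.1, Pw, finPoly_approx Pw c.card, rfl⟩
    have hPwO : Pw ∈ O := ⟨⟨subset_rfl, subset_rfl⟩, c.card, rfl⟩
    obtain ⟨D, hDO, hDG⟩ := (hGdense n).inter_open_nonempty O hOopen ⟨Pw, hPwO⟩
    rw [hO_def] at hDO
    rw [mem_nbhd_theta hwi haFk h1a h0 hpw D] at hDO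
    obtain ⟨hDi, hDw, hDvr, hDT⟩ := hDO
    set z := D.1.1 with hz_def
    have hvrz : vrestrict z c.card = c := by rw [hDvr, hvrc]
    have hn₀c : n₀ ≤ c.card := by
      rw [← haFcard]
      exact Finset.card_le_card hafc
    have hz𝒴 : z ∈ Y𝒴 := by
      refine ⟨hDi, hDw.trans (Set.union_subset hcx htx), ?_⟩
      have hinitaFw : SInit aF w := sinit_trans hafc hinitc hinitcw
      have : vrestrict w n₀ = aF := by
        have := vr_eq_of_sinit hwi hinitaFw
        rwa [haFcard] at this
      rw [vr_agree_of_le hDi hwi hDvr hn₀c, this]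
    refine ⟨z, ⟨hDi, sinit_of_vr_eq hDi (by rw [hvrz]), ?_⟩, hz𝒴, ?_⟩
    · rw [← hw_def]; exact hDw
    · intro P hP
      have : P = D := Subtype.ext (by rw [hP, ← hDT, hz_def])
      rwa [this]
  -- fusion to avoid all the nowhere dense sets
  have hsep₀ : ∀ i ∈ aF, ∀ j ∈ x₀ \ ↑aF, i < j := by
    intro i hi j hj
    exact hinitx₀.2 j hj.1 (fun h => hj.2 (Finset.mem_coe.2 h)) i hi
  obtain ⟨t₁, ht₁sub, ht₁i, hfus⟩ := fusion hWEO hWdense haFx hinitx₀ (x₀ \ ↑aF)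
    Set.diff_subset (hCinf.diff aF.finite_toSet) hsep₀
  have hsep₁ : ∀ i ∈ aF, ∀ j ∈ t₁, i < j := fun i hi j hj => hsep₀ i hi j (ht₁sub hj)
  obtain ⟨t₂, ht₂sub, ht₂i, halt⟩ := galvin hUEO aF t₁ ht₁i hsep₁
  have hsep₂ : ∀ i ∈ aF, ∀ j ∈ t₂, i < j := fun i hi j hj => hsep₁ i hi j (ht₂sub hj)
  -- build the witness
  set ys : Set ℕ := ↑aF ∪ t₂ with hys_def
  have hysi : ys.Infinite := ht₂i.mono Set.subset_union_right
  have hysx : ys ⊆ x₀ := Set.union_subset haFx (fun j hj => (ht₁sub (ht₂sub hj)).1)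
  have haFys : ↑aF ⊆ ys := Set.subset_union_left
  have hysinit : SInit aF ys := sinit_union hsep₂
  have hysvr : vrestrict ys n₀ = aF := by
    have := vr_eq_of_sinit hysi hysinit
    rwa [haFcard] at this
  have hpys : InfPoly (ys, Tset a₂ ys) := theta_poly h1a haher h0 hysi haFys
  set B : PolySpace := ⟨(ys, Tset a₂ ys), hpys⟩ with hB_def
  have habsorb : a₂ ∪ {u | ∃ k ∈ aF, u = {k}} = a₂ := by
    apply Set.union_eq_self_of_subset_right
    rintro u ⟨k, hk, rfl⟩
    exact hsing k hk
  have happB : approx n₀ B.1 = a := by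
    show (↑(vrestrict ys n₀), frestrict (Tset a₂ ys) (vrestrict ys n₀)) = a
    rw [hysvr, frestrict_Tset_full h1a h0 subset_rfl haFys
      ((hysi.diff aF.finite_toSet).nonempty), habsorb, haeq]
  have hBA : B ∈ nbhd a A := by
    refine ⟨⟨hysx.trans hCv, ?_⟩, n₀, happB⟩
    rintro u (hu | ⟨k, hk, rfl⟩)
    · exact hCS (ha₂C hu)
    · exact hsingA k (hysx hk)
  -- characterize members of [a; B]
  have haFk' : aF ⊆ vrestrict ys n₀ := by rw [hysvr]
  have hmem : ∀ B' : PolySpace, B' ∈ nbhd a B →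
      B'.1.1 ∈ Ngh aF t₂ ∧ B'.1.2 = Tset a₂ B'.1.1 ∧ B'.1.1 ∈ Y𝒴 := by
    intro B' hB'
    rw [← happB] at hB'
    rw [mem_nbhd_theta hysi haFk' h1a h0 hpys B'] at hB'
    obtain ⟨hB'i, hB'w, hB'vr, hB'T⟩ := hB'
    have hvreq : vrestrict B'.1.1 n₀ = aF := by rw [hB'vr, hysvr]
    refine ⟨⟨hB'i, sinit_of_vr_eq hB'i (by rw [haFcard]; exact hvreq), by
      rw [← hys_def]; exact hB'w⟩, hB'T, hB'i, hB'w.trans hysx, hvreq⟩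
  have hnotM : ∀ B' : PolySpace, B' ∈ nbhd a B → B' ∉ M := by
    intro B' hB' hBM
    obtain ⟨hNgh, hT, h𝒴⟩ := hmem B' hB'
    have hW : ∀ n, B'.1.1 ∈ Wst n := fun n =>
      hfus B'.1.1 (Ngh_mono ht₂sub hNgh) n
    obtain ⟨nn, hnn⟩ := Set.mem_iUnion.1 (hMN hBM)
    exact (hW nn).2 B' (by rw [← hT]) (subset_closure hnn)
  refine ⟨B, hBA, ?_⟩
  rcases halt with hin | hout
  · left
    intro B' hB'
    obtain ⟨hNgh, hT, h𝒴⟩ := hmem B' hB'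
    have hU' : B' ∈ U := (hin hNgh).2 B' (by rw [← hT])
    rw [hXUM]
    exact Set.mem_symmDiff.2 (Or.inl ⟨hU', hnotM B' hB'⟩)
  · right
    rw [Set.eq_empty_iff_forall_notMem]
    rintro B' ⟨hB', hB'X⟩
    obtain ⟨hNgh, hT, h𝒴⟩ := hmem B' hB'
    rw [hXUM] at hB'X
    rcases Set.mem_symmDiff.1 hB'X with ⟨hU', -⟩ | ⟨hM', -⟩
    · have : B'.1.1 ∈ Ust := ⟨h𝒴, fun P hP => by
        have : P = B' := Subtype.ext (by rw [hP, ← hT])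
        rwa [this]⟩
      have : B'.1.1 ∈ Ngh aF t₂ ∩ Ust := ⟨hNgh, this⟩
      rw [hout] at this
      exact this
    · exact hnotM B' hB' hM'
end Galvin
end

section
/- The set of approximation sequences {(r_n(A,S_A))_{n∈ℕ} : (A,S_A) ∈ 𝒫} is a closed subset of the product space 𝒜𝒫^ℕ, where 𝒜𝒫 carries the discrete topology and 𝒜𝒫^ℕ the product topology. -/
open Set

/-- `(a,S_a) ≤_fin (b,S_b)` iff `(a,S_a) ≤ (b,S_b)` and `max a = max b`. -/
def plefin (P Q : PPair) : Prop := ple P Q ∧ sSup P.1 = sSup Q.1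

/-- The Ellentuck neighborhood `[(a,S_a); (A,S_A)]` inside `𝒫`. -/
def nbhdRaw (a A : PPair) : Set PPair :=
  {B | InfPoly B ∧ ple B A ∧ ∃ n, approx n B = a}

/-- `depth_{(A,S_A)}(a,S_a)`. -/
noncomputable def pdepth (A a : PPair) : ℕ := sInf {n | plefin a (approx n A)}

/-- The approximation sequence of a pair. -/
noncomputable def approxSeq (P : PPair) : ℕ → PPair := fun n => approx n P

lemma setOf_mem_inf {x : Set ℕ} (hx : x.Infinite) : {k | (· ∈ x) k}.Infinite := hx

lemma vrestrict_coe_subset {x : Set ℕ} (hx : x.Infinite) (n : ℕ) :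
    ↑(vrestrict x n) ⊆ x := by
  intro k hk
  simp only [vrestrict, Finset.coe_image, Finset.coe_range, Set.mem_image] at hk
  obtain ⟨i, -, rfl⟩ := hk
  exact Nat.nth_mem_of_infinite (setOf_mem_inf hx) i

lemma vrestrict_card {x : Set ℕ} (hx : x.Infinite) (n : ℕ) :
    (vrestrict x n).card = n := by
  rw [vrestrict, Finset.card_image_of_injective _ (Nat.nth_injective (setOf_mem_inf hx)),
    Finset.card_range]

lemma vrestrict_mono (x : Set ℕ) {m n : ℕ} (h : m ≤ n) :
    vrestrict x m ⊆ vrestrict x n :=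
  Finset.image_subset_image (Finset.range_subset_range.2 h)

lemma vrestrict_sep {x : Set ℕ} (hx : x.Infinite) {m n j k : ℕ}
    (hj : j ∈ vrestrict x m) (hk : k ∈ vrestrict x n) (hk' : k ∉ vrestrict x m) :
    j < k := by
  simp only [vrestrict, Finset.mem_image, Finset.mem_range] at hj hk
  obtain ⟨i, hi, rfl⟩ := hj
  obtain ⟨i', hi', rfl⟩ := hk
  have : ¬ i' < m := fun h => hk' (by
    simp only [vrestrict, Finset.mem_image, Finset.mem_range]; exact ⟨i', h, rfl⟩)
  exact (Nat.nth_lt_nth (setOf_mem_inf hx)).2 (lt_of_lt_of_le hi (le_of_not_gt this))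

lemma vrestrict_eq_of {x : Set ℕ} (hx : x.Infinite) {n : ℕ} {a : Finset ℕ}
    (hsub : ↑a ⊆ x) (hcard : a.card = n)
    (hdown : ∀ k ∈ x, k ∉ a → ∀ j ∈ a, j < k) :
    vrestrict x n = a := by
  have hsubset : vrestrict x n ⊆ a := by
    intro k hk
    by_contra hka
    have hkx : k ∈ x := vrestrict_coe_subset hx n hk
    simp only [vrestrict, Finset.mem_image, Finset.mem_range] at hk
    obtain ⟨i, hi, rfl⟩ := hk
    haveI : DecidablePred (· ∈ x) := Classical.decPred _
    have : a ⊆ (Finset.range i).image (Nat.nth (· ∈ x)) := by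
      intro j hj
      have hjx : j ∈ x := hsub hj
      have hjlt : j < Nat.nth (· ∈ x) i := hdown _ hkx hka j hj
      have hnc : Nat.nth (· ∈ x) (Nat.count (· ∈ x) j) = j := Nat.nth_count hjx
      have : Nat.count (· ∈ x) j < i := by
        have := hnc ▸ hjlt
        exact (Nat.nth_lt_nth (setOf_mem_inf hx)).1 this
      simp only [Finset.mem_image, Finset.mem_range]
      exact ⟨_, this, hnc⟩
    have hle : a.card ≤ i := le_trans (Finset.card_le_card this)
      (le_trans Finset.card_image_le (le_of_eq (Finset.card_range i)))
    omega
  exact Finset.eq_of_subset_of_card_le hsubset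
    (by rw [hcard, vrestrict_card hx])

lemma frestrict_subset_of_hereditary {S : Set (Finset ℕ)}
    (hS : Hereditary S) (a : Finset ℕ) :
    frestrict S a ⊆ S := by
  rintro u ⟨w, hw, rfl⟩
  exact hS _ _ Finset.inter_subset_left hw

lemma frestrict_hereditary {S : Set (Finset ℕ)}
    (hS : Hereditary S) (a : Finset ℕ) :
    Hereditary (frestrict S a) := by
  rintro u v huv ⟨w, hw, rfl⟩
  refine ⟨u, hS _ _ (huv.trans Finset.inter_subset_left) hw, ?_⟩
  exact Finset.inter_eq_left.2 (huv.trans Finset.inter_subset_right)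

lemma limit_exists (f : ℕ → PPair)
    (h : ∀ N : ℕ, ∃ A : PPair, InfPoly A ∧ ∀ n ≤ N, approx n A = f n) :
    ∃ A : PPair, InfPoly A ∧ f = approxSeq A := by
  choose A hA hAf using h
  have hinf : ∀ N, (A N).1.Infinite := fun N => (hA N).2
  have hpoly : ∀ N, IsPolyPair (A N) := fun N => (hA N).1
  set a : ℕ → Finset ℕ := fun n => vrestrict (A n).1 n with ha
  have hP1 : ∀ n, ((a n : Finset ℕ) : Set ℕ) = (f n).1 := fun n =>
    congrArg Prod.fst (hAf n n le_rfl)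
  have hP3 : ∀ N n, n ≤ N → vrestrict (A N).1 n = a n := by
    intro N n hn
    apply Finset.coe_injective
    rw [hP1 n]
    exact congrArg Prod.fst (hAf N n hn)
  have hP2 : ∀ N n, n ≤ N → frestrict (A N).2 (a n) = (f n).2 := by
    intro N n hn
    have h2 := congrArg Prod.snd (hAf N n hn)
    simp only [approx] at h2
    rwa [hP3 N n hn] at h2
  have hP4 : ∀ m n, m ≤ n → a m ⊆ a n := by
    intro m n hmn
    rw [← hP3 n m hmn]
    exact vrestrict_mono _ hmn
  have hP5 : ∀ n, (a n).card = n := fun n => vrestrict_card (hinf n) n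
  have hP6 : ∀ m n j k, m ≤ n → j ∈ a m → k ∈ a n → k ∉ a m → j < k := by
    intro m n j k hmn hj hk hk'
    rw [← hP3 n m hmn] at hj hk'
    exact vrestrict_sep (hinf n) hj hk hk'
  set x : Set ℕ := ⋃ n, ((a n : Finset ℕ) : Set ℕ) with hxdef
  set S : Set (Finset ℕ) := ⋃ n, (f n).2 with hSdef
  have hax : ∀ n, ((a n : Finset ℕ) : Set ℕ) ⊆ x := fun n => Set.subset_iUnion (fun m => ((a m : Finset ℕ) : Set ℕ)) n
  have hxinf : x.Infinite := by
    intro hfin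
    have : ∀ n, a n ⊆ hfin.toFinset := by
      intro n j hj
      exact hfin.mem_toFinset.2 (hax n hj)
    have := Finset.card_le_card (this (hfin.toFinset.card + 1))
    rw [hP5] at this
    omega
  have hvr : ∀ n, vrestrict x n = a n := by
    intro n
    refine vrestrict_eq_of hxinf (hax n) (hP5 n) ?_
    intro k hk hka j hj
    obtain ⟨m, hm⟩ := Set.mem_iUnion.1 hk
    rcases le_total m n with hmn | hnm
    · exact absurd (hP4 m n hmn hm) hka
    · exact hP6 n m j k hnm hj hm hka
  have hmemS : ∀ n u, u ∈ (f n).2 → u ∈ S := fun n u hu => Set.mem_iUnion.2 ⟨n, hu⟩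
  have hsubA : ∀ n (u : Finset ℕ), u ∈ (f n).2 → u ⊆ a n := by
    intro n u hu
    rw [← hP2 n n le_rfl] at hu
    obtain ⟨w, -, rfl⟩ := hu
    exact Finset.inter_subset_right
  have hfnher : ∀ n, Hereditary (f n).2 := by
    intro n
    rw [← hP2 n n le_rfl]
    exact frestrict_hereditary (hpoly n).2.1 _
  have hfr : ∀ n, frestrict S (a n) = (f n).2 := by
    intro n
    apply Set.Subset.antisymm
    · rintro u ⟨v, hv, rfl⟩
      obtain ⟨m, hm⟩ := Set.mem_iUnion.1 hv
      set M := max n m with hM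
      have hvM : v ∈ (A M).2 := by
        rw [← hP2 M m (le_max_right n m)] at hm
        exact frestrict_subset_of_hereditary (hpoly M).2.1 _ hm
      rw [← hP2 M n (le_max_left n m)]
      exact ⟨v, hvM, rfl⟩
    · intro u hu
      exact ⟨u, hmemS n u hu, Finset.inter_eq_left.2 (hsubA n u hu)⟩
  refine ⟨(x, S), ⟨⟨?_, ?_, ?_⟩, hxinf⟩, ?_⟩
  · -- members of S are subsets of x
    intro u hu
    obtain ⟨n, hn⟩ := Set.mem_iUnion.1 hu
    exact fun k hk => hax n (Finset.mem_coe.2 (hsubA n u hn (Finset.mem_coe.1 hk)))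
  · -- hereditary
    intro u v huv hv
    obtain ⟨n, hn⟩ := Set.mem_iUnion.1 hv
    exact hmemS n u (hfnher n u v huv hn)
  · -- cover
    intro k hk
    obtain ⟨n, hn⟩ := Set.mem_iUnion.1 hk
    have hkA : k ∈ (A n).1 := by
      rw [show a n = vrestrict (A n).1 n from rfl] at hn
      exact vrestrict_coe_subset (hinf n) n hn
    obtain ⟨w, hw, hkw⟩ := (hpoly n).2.2 k hkA
    refine ⟨w ∩ a n, hmemS n _ ?_, Finset.mem_inter.2 ⟨hkw, hn⟩⟩
    rw [← hP2 n n le_rfl]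
    exact ⟨w, hw, rfl⟩
  · -- f = approxSeq
    funext n
    show f n = approx n (x, S)
    simp only [approx]
    rw [hvr n, hfr n, hP1 n]

/-- The set of approximation sequences of elements of `𝒫` is closed in the product space
`𝒜𝒫^ℕ` (approximations carrying the discrete topology, the sequence space the product
topology). -/
theorem polySpace_metrically_closed :
    letI : TopologicalSpace PPair := ⊥
    IsClosed {f : ℕ → PPair | ∃ A : PPair, InfPoly A ∧ f = approxSeq A} := by
  letI : TopologicalSpace PPair := ⊥
  haveI : DiscreteTopology PPair := ⟨rfl⟩
  rw [← isOpen_compl_iff, isOpen_iff_forall_mem_open]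
  intro f hf
  simp only [Set.mem_compl_iff, Set.mem_setOf_eq] at hf
  have hN : ∃ N : ℕ, ∀ A : PPair, InfPoly A → ∃ n, n ≤ N ∧ approx n A ≠ f n := by
    by_contra hc
    push_neg at hc
    exact hf (limit_exists f fun N => by
      obtain ⟨A, hA, h2⟩ := hc N
      exact ⟨A, hA, fun n hn => h2 n hn⟩)
  obtain ⟨N, hN⟩ := hN
  refine ⟨{g | ∀ n ≤ N, g n = f n}, ?_, ?_, fun n _ => rfl⟩
  · rintro g hg ⟨A, hA, rfl⟩
    obtain ⟨n, hn, hne⟩ := hN A hA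
    exact hne (hg n hn)
  · have heq : {g : ℕ → PPair | ∀ n ≤ N, g n = f n} =
        ⋂ n ∈ Finset.range (N + 1), (fun g : ℕ → PPair => g n) ⁻¹' {f n} := by
      ext g
      simp [Nat.lt_succ_iff]
    rw [heq]
    exact isOpen_biInter_finset fun n _ =>
      (continuous_apply n).isOpen_preimage _ (isOpen_discrete _)
end

section
/- The pigeonhole axiom holds for 𝒫: let (a,S_a) ∈ 𝒜𝒫 and (B,S_B) ∈ 𝒫 with [(a,S_a);(B,S_B)] ≠ ∅, n = depth_{(B,S_B)}(a,S_a) and k = |a|. Then for every coloring c : 𝒜𝒫_{k+1} → {0,1} there exists (A,S_A) ∈ [n;(B,S_B)] such that c is constant on r_{k+1}[(a,S_a);(A,S_A)] := {r_{k+1}(C,S_C) : (C,S_C) ∈ [(a,S_a);(A,S_A)]}. -/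
open Set

section Helpers

variable {y : Set ℕ} {n : ℕ}

lemma mem_vrestrict_iff (hy : y.Infinite) {m : ℕ} :
    m ∈ vrestrict y n ↔ m ∈ y ∧ m < Nat.nth (· ∈ y) n := by
  classical
  constructor
  · rintro hm
    simp only [vrestrict, Finset.mem_image, Finset.mem_range] at hm
    obtain ⟨i, hi, rfl⟩ := hm
    exact ⟨Nat.nth_mem_of_infinite (p := fun x => x ∈ y) hy i, Nat.nth_strictMono (p := fun x => x ∈ y) hy hi⟩
  · rintro ⟨hmy, hlt⟩
    have h1 : Nat.nth (· ∈ y) (Nat.count (· ∈ y) m) = m := Nat.nth_count hmy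
    have h2 : Nat.count (· ∈ y) m < n := by
      by_contra h
      push_neg at h
      have := (Nat.nth_strictMono (p := fun x => x ∈ y) hy).monotone h
      rw [h1] at this
      omega
    simp only [vrestrict, Finset.mem_image, Finset.mem_range]
    exact ⟨_, h2, h1⟩

lemma card_vrestrict (hy : y.Infinite) : (vrestrict y n).card = n := by
  rw [vrestrict, Finset.card_image_of_injective _ (Nat.nth_injective (p := fun x => x ∈ y) hy), Finset.card_range]

lemma vrestrict_succ (y : Set ℕ) (n : ℕ) :
    vrestrict y (n + 1) = insert (Nat.nth (· ∈ y) n) (vrestrict y n) := by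
  rw [vrestrict, Finset.range_add_one, Finset.image_insert]; rfl

lemma vrestrict_zero (y : Set ℕ) : vrestrict y 0 = ∅ := by
  simp [vrestrict]

lemma vrestrict_subset (hy : y.Infinite) : ∀ m ∈ vrestrict y n, m ∈ y := fun m hm =>
  ((mem_vrestrict_iff hy).1 hm).1

lemma vrestrict_eq_of_initial (hy : y.Infinite) {b : Finset ℕ} (hb : ↑b ⊆ y)
    (hcard : b.card = n) (hinit : ∀ m ∈ y, m ∉ b → ∀ j ∈ b, j < m) :
    vrestrict y n = b := by
  classical
  refine Finset.eq_of_subset_of_card_le ?_ ?_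
  · intro m hm
    by_contra hmb
    have hmy : m ∈ y := ((mem_vrestrict_iff hy).1 hm).1
    have hmlt : m < Nat.nth (· ∈ y) n := ((mem_vrestrict_iff hy).1 hm).2
    have hcnt : Nat.nth (· ∈ y) (Nat.count (· ∈ y) m) = m := Nat.nth_count hmy
    have hsub : b ⊆ (Finset.range (Nat.count (· ∈ y) m)).image (Nat.nth (· ∈ y)) := by
      intro j hj
      have hjy : j ∈ y := hb hj
      have hjlt : j < m := hinit m hmy hmb j hj
      have h1 : Nat.nth (· ∈ y) (Nat.count (· ∈ y) j) = j := Nat.nth_count hjy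
      have h2 : Nat.count (· ∈ y) j < Nat.count (· ∈ y) m := by
        by_contra h
        push_neg at h
        have := (Nat.nth_strictMono (p := fun x => x ∈ y) hy).monotone h
        rw [h1, hcnt] at this
        omega
      simp only [Finset.mem_image, Finset.mem_range]
      exact ⟨_, h2, h1⟩
    have hc1 : b.card ≤ Nat.count (· ∈ y) m :=
      le_trans (Finset.card_le_card hsub)
        (le_of_le_of_eq Finset.card_image_le (Finset.card_range _))
    have hc2 : Nat.count (· ∈ y) m < n := by
      by_contra h
      push_neg at h
      have := (Nat.nth_strictMono (p := fun x => x ∈ y) hy).monotone h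
      rw [hcnt] at this
      omega
    omega
  · rw [card_vrestrict hy, hcard]

lemma frestrict_empty {S : Set (Finset ℕ)} (hS : S.Nonempty) :
    frestrict S ∅ = {∅} := by
  ext w
  simp only [frestrict, Set.mem_image, Set.mem_singleton_iff]
  constructor
  · rintro ⟨u, _, rfl⟩; exact Finset.inter_empty u
  · rintro rfl; obtain ⟨u, hu⟩ := hS; exact ⟨u, hu, Finset.inter_empty u⟩

lemma inter_insert_of_notMem' {u s : Finset ℕ} {x : ℕ} (h : x ∉ u) :
    u ∩ insert x s = u ∩ s := by
  ext z
  simp only [Finset.mem_inter, Finset.mem_insert]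
  constructor
  · rintro ⟨hzu, rfl | hz⟩
    · exact absurd hzu h
    · exact ⟨hzu, hz⟩
  · rintro ⟨hzu, hz⟩; exact ⟨hzu, Or.inr hz⟩

end Helpers

/-- Axiom A.4 (pigeonhole principle) for `𝒫`: with `n = depth_{(B,S_B)}(a,S_a)` and
`k = |a|`, for every two-coloring `c` of `𝒜𝒫_{k+1}` there is
`(A,S_A) ∈ [n;(B,S_B)]` such that `c` is constant on
`r_{k+1}[(a,S_a);(A,S_A)] = {r_{k+1}(C,S_C) : (C,S_C) ∈ [(a,S_a);(A,S_A)]}`. -/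
theorem polyPair_axiom_A4 (a B : PPair) (ha : FinPoly a) (hB : InfPoly B)
    (hne : (nbhdRaw a B).Nonempty) (c : PPair → Bool) :
    ∃ A ∈ nbhdRaw (approx (pdepth B a) B) B,
      ∀ C ∈ nbhdRaw a A, ∀ D ∈ nbhdRaw a A,
        c (approx (a.1.ncard + 1) C) = c (approx (a.1.ncard + 1) D) := by
  classical
  obtain ⟨C0, ⟨⟨hC0sub, hC0her, hC0cov⟩, hC0i⟩, hC0le, m0, hC0a⟩ := hne
  obtain ⟨⟨hBsub, hBher, hBcov⟩, hBi⟩ := hB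
  -- basic facts about B.2
  have hBne : ∃ u, u ∈ B.2 := by
    obtain ⟨x, hx⟩ := hBi.nonempty
    obtain ⟨u, hu, _⟩ := hBcov x hx
    exact ⟨u, hu⟩
  have hBempty : (∅ : Finset ℕ) ∈ B.2 := by
    obtain ⟨u, hu⟩ := hBne
    exact hBher ∅ u (Finset.empty_subset u) hu
  have singB : ∀ x ∈ B.1, ({x} : Finset ℕ) ∈ B.2 := by
    intro x hx
    obtain ⟨u, hu, hxu⟩ := hBcov x hx
    exact hBher {x} u (Finset.singleton_subset_iff.2 hxu) hu
  -- the components of a via C0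
  have ha1 : a.1 = ↑(vrestrict C0.1 m0) := (congrArg Prod.fst hC0a).symm
  have ha2 : a.2 = frestrict C0.2 (vrestrict C0.1 m0) := (congrArg Prod.snd hC0a).symm
  have hm0 : m0 = a.1.ncard := by
    rw [ha1, Set.ncard_coe_finset, card_vrestrict hC0i]
  have ha1C0 : a.1 ⊆ C0.1 := by
    rw [ha1]; intro x hx; exact vrestrict_subset hC0i x hx
  -- case a.1 = ∅ : 0 is in the depth set
  have h0D : a.1 = ∅ → plefin a (approx 0 B) := by
    intro hae
    have hm00 : m0 = 0 := by rw [hm0, hae, Set.ncard_empty]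
    have ha2' : a.2 = {∅} := by
      rw [ha2, hm00, vrestrict_zero]
      refine frestrict_empty ?_
      obtain ⟨x, hx⟩ := hC0i.nonempty
      obtain ⟨u, hu, _⟩ := hC0cov x hx
      exact ⟨u, hu⟩
    constructor
    · constructor
      · rw [hae]; exact Set.empty_subset _
      · show a.2 ⊆ frestrict B.2 (vrestrict B.1 0)
        rw [ha2', vrestrict_zero, frestrict_empty hBne]
    · show sSup a.1 = sSup (↑(vrestrict B.1 0) : Set ℕ)
      rw [hae, vrestrict_zero]; simp
  -- the depth set is nonempty
  have hDne : {n | plefin a (approx n B)}.Nonempty := by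
    rcases Set.eq_empty_or_nonempty a.1 with hae | hane
    · exact ⟨0, h0D hae⟩
    · -- a.1 nonempty
      have haf : a.1.Finite := ha.2
      have hM : sSup a.1 ∈ a.1 := Nat.sSup_mem hane haf.bddAbove
      set M := sSup a.1 with hMdef
      have hMB : M ∈ B.1 := hC0le.1 (ha1C0 hM)
      set n0 := Nat.count (· ∈ B.1) M + 1 with hn0
      have hnthM : Nat.nth (· ∈ B.1) (Nat.count (· ∈ B.1) M) = M := Nat.nth_count hMB
      have hMlt : M < Nat.nth (· ∈ B.1) n0 := by
        calc M = Nat.nth (· ∈ B.1) (Nat.count (· ∈ B.1) M) := hnthM.symm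
        _ < Nat.nth (· ∈ B.1) n0 := Nat.nth_strictMono (p := fun x => x ∈ B.1) hBi (by omega)
      have hab0 : a.1 ⊆ ↑(vrestrict B.1 n0) := by
        intro x hx
        have hxB : x ∈ B.1 := hC0le.1 (ha1C0 hx)
        have hxM : x ≤ M := le_csSup haf.bddAbove hx
        exact (mem_vrestrict_iff hBi).2 ⟨hxB, lt_of_le_of_lt hxM hMlt⟩
      refine ⟨n0, ⟨⟨hab0, ?_⟩, ?_⟩⟩
      · -- a.2 ⊆ frestrict B.2 (vrestrict B.1 n0)
        show a.2 ⊆ frestrict B.2 (vrestrict B.1 n0)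
        rw [ha2]
        rintro w ⟨u, hu, rfl⟩
        refine ⟨u ∩ vrestrict C0.1 m0, hBher _ u Finset.inter_subset_left (hC0le.2 hu), ?_⟩
        have hsub : u ∩ vrestrict C0.1 m0 ⊆ vrestrict B.1 n0 := by
          intro z hz
          have : z ∈ a.1 := by
            rw [ha1]
            exact_mod_cast (Finset.mem_inter.1 hz).2
          exact_mod_cast hab0 this
        exact Finset.inter_eq_left.2 hsub
      · -- sups agree
        show sSup a.1 = sSup (↑(vrestrict B.1 n0) : Set ℕ)
        have hMb0 : M ∈ vrestrict B.1 n0 := (mem_vrestrict_iff hBi).2 ⟨hMB, hMlt⟩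
        have hub : ∀ j ∈ (↑(vrestrict B.1 n0) : Set ℕ), j ≤ M := by
          intro j hj
          have hj' : j ∈ vrestrict B.1 n0 := hj
          have hjB : j ∈ B.1 := ((mem_vrestrict_iff hBi).1 hj').1
          have hjlt : j < Nat.nth (· ∈ B.1) n0 := ((mem_vrestrict_iff hBi).1 hj').2
          have h1 : Nat.nth (· ∈ B.1) (Nat.count (· ∈ B.1) j) = j := Nat.nth_count hjB
          have h2 : Nat.count (· ∈ B.1) j ≤ Nat.count (· ∈ B.1) M := by
            by_contra h
            push_neg at h
            have := (Nat.nth_strictMono (p := fun x => x ∈ B.1) hBi).monotone (show n0 ≤ Nat.count (· ∈ B.1) j by omega)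
            omega
          have := (Nat.nth_strictMono (p := fun x => x ∈ B.1) hBi).monotone h2
          rw [h1, hnthM] at this
          exact this
        refine le_antisymm ?_ ?_
        · exact le_csSup ((vrestrict B.1 n0).finite_toSet.bddAbove) (hab0 hM)
        · exact csSup_le ⟨M, hMb0⟩ hub
  -- n := depth, b := first n elements of B
  set n := pdepth B a with hndef
  have hnD : plefin a (approx n B) := Nat.sInf_mem hDne
  set b := vrestrict B.1 n with hbdef
  obtain ⟨⟨ha1b, ha2b⟩, hsupab⟩ := hnD
  have ha1b : a.1 ⊆ ↑b := ha1b
  have ha2b : a.2 ⊆ frestrict B.2 b := ha2b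
  have hsupab : sSup a.1 = sSup (↑b : Set ℕ) := hsupab
  -- key: anything above all of a.1 is not in b
  have hbkey : ∀ v : ℕ, (∀ x ∈ a.1, x < v) → v ∉ (↑b : Set ℕ) := by
    intro v hv hvb
    rcases Set.eq_empty_or_nonempty a.1 with hae | hane
    · have hn0 : n = 0 := Nat.le_zero.1 (Nat.sInf_le (h0D hae))
      rw [hbdef, hn0, vrestrict_zero] at hvb
      simpa using hvb
    · have hM : sSup a.1 ∈ a.1 := Nat.sSup_mem hane ha.2.bddAbove
      have h1 : v ≤ sSup (↑b : Set ℕ) := le_csSup (b.finite_toSet.bddAbove) hvb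
      rw [← hsupab] at h1
      exact absurd (lt_of_le_of_lt h1 (hv _ hM)) (lt_irrefl v)
  -- the one-point extensions and the coloring
  set g : ℕ → PPair := fun x => (insert x a.1, insert ({x} : Finset ℕ) a.2) with hgdef
  set Tail : Set ℕ := {x | x ∈ B.1 ∧ sSup (↑b : Set ℕ) < x} with hTaildef
  have hTailInf : Tail.Infinite := by
    refine Set.Infinite.mono ?_ (hBi.diff (Set.finite_Iic (sSup (↑b : Set ℕ))))
    intro x hx
    exact ⟨hx.1, by simpa using hx.2⟩
  set t : Bool := if ({x ∈ Tail | c (g x) = true} : Set ℕ).Infinite then true else false with htdef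
  set T : Set ℕ := {x ∈ Tail | c (g x) = t} with hTdef
  have hTInf : T.Infinite := by
    by_cases h : ({x ∈ Tail | c (g x) = true} : Set ℕ).Infinite
    · have : t = true := by rw [htdef, if_pos h]
      rw [hTdef, this]; exact h
    · have ht' : t = false := by rw [htdef, if_neg h]
      rw [Set.not_infinite] at h
      rw [hTdef, ht']
      intro hfin
      apply hTailInf
      refine Set.Finite.subset (h.union hfin) ?_
      intro x hx
      rcases Bool.eq_false_or_eq_true (c (g x)) with hb' | hb'
      · exact Or.inl ⟨hx, hb'⟩
      · exact Or.inr ⟨hx, hb'⟩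
  have hTB : T ⊆ B.1 := fun x hx => hx.1.1
  -- the refined pair A'
  set A' : PPair := ((↑b : Set ℕ) ∪ T,
      {u | u ∈ B.2 ∧ (↑u : Set ℕ) ⊆ (↑b : Set ℕ)} ∪
      {u | ∃ x ∈ (↑b : Set ℕ) ∪ T, u = {x}} ∪ {∅}) with hA'def
  have hbB : (↑b : Set ℕ) ⊆ B.1 := by
    intro x hx; exact vrestrict_subset hBi x hx
  have hA'1B : A'.1 ⊆ B.1 := by
    rintro x (hx | hx)
    · exact hbB hx
    · exact hTB hx
  have hA'2B : A'.2 ⊆ B.2 := by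
    rintro u ((hu | hu) | hu)
    · exact hu.1
    · obtain ⟨x, hx, rfl⟩ := hu
      exact singB x (hA'1B hx)
    · rw [Set.mem_singleton_iff] at hu
      rw [hu]; exact hBempty
  have hA'poly : IsPolyPair A' := by
    refine ⟨?_, ?_, ?_⟩
    · rintro u ((hu | hu) | hu)
      · exact fun z hz => Or.inl (hu.2 hz)
      · obtain ⟨x, hx, rfl⟩ := hu
        intro z hz
        simp only [Finset.coe_singleton, Set.mem_singleton_iff] at hz
        rw [hz]; exact hx
      · rw [Set.mem_singleton_iff] at hu
        rw [hu]; simp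
    · intro u v huv hv
      rcases hv with (hv | hv) | hv
      · exact Or.inl (Or.inl ⟨hBher u v huv hv.1, fun z hz => hv.2 (huv hz)⟩)
      · obtain ⟨x, hx, rfl⟩ := hv
        rcases Finset.subset_singleton_iff.1 huv with rfl | rfl
        · exact Or.inr rfl
        · exact Or.inl (Or.inr ⟨x, hx, rfl⟩)
      · rw [Set.mem_singleton_iff] at hv
        rw [hv] at huv
        rw [Finset.subset_empty.1 huv]
        exact Or.inr rfl
    · intro x hx
      exact ⟨{x}, Or.inl (Or.inr ⟨x, hx, rfl⟩), Finset.mem_singleton_self x⟩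
  have hA'inf : A'.1.Infinite := Set.Infinite.mono Set.subset_union_right hTInf
  -- approx n A' = approx n B
  have hvA' : vrestrict A'.1 n = b := by
    refine vrestrict_eq_of_initial hA'inf Set.subset_union_left (card_vrestrict hBi) ?_
    intro m hm hmb j hj
    have hmT : m ∈ T := by
      rcases hm with hm | hm
      · exact absurd hm hmb
      · exact hm
    have hj' : j ≤ sSup (↑b : Set ℕ) := le_csSup (b.finite_toSet.bddAbove) hj
    exact lt_of_le_of_lt hj' hmT.1.2
  have hfr : frestrict A'.2 b = frestrict B.2 b := by
    refine Set.Subset.antisymm ?_ ?_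
    · rintro w ⟨u, hu, rfl⟩
      exact ⟨u, hA'2B hu, rfl⟩
    · rintro w ⟨u, hu, rfl⟩
      refine ⟨u ∩ b, Or.inl (Or.inl ⟨hBher _ u Finset.inter_subset_left hu, ?_⟩), ?_⟩
      · exact_mod_cast (Finset.inter_subset_right : u ∩ b ⊆ b)
      · show (u ∩ b) ∩ b = u ∩ b
        rw [Finset.inter_assoc, Finset.inter_self]
  have happrox : approx n A' = approx n B := by
    unfold approx
    rw [hvA', hfr, hbdef]
  -- main claim: every C in [a; A'] gets color t
  have hmain : ∀ C ∈ nbhdRaw a A', c (approx (a.1.ncard + 1) C) = t := by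
    rintro C ⟨⟨⟨hCsub, hCher, hCcov⟩, hCi⟩, ⟨hC1, hC2⟩, m, hCa⟩
    have hCa1 : a.1 = ↑(vrestrict C.1 m) := (congrArg Prod.fst hCa).symm
    have hCa2 : a.2 = frestrict C.2 (vrestrict C.1 m) := (congrArg Prod.snd hCa).symm
    have hm : m = a.1.ncard := by
      rw [hCa1, Set.ncard_coe_finset, card_vrestrict hCi]
    set afin := vrestrict C.1 m with hafin
    set v := Nat.nth (· ∈ C.1) m with hvdef
    have hvC : v ∈ C.1 := Nat.nth_mem_of_infinite (p := fun x => x ∈ C.1) hCi m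
    have hva : ∀ x ∈ a.1, x < v := by
      intro x hx
      rw [hCa1] at hx
      exact ((mem_vrestrict_iff hCi).1 (by exact_mod_cast hx)).2
    have hvb : v ∉ (↑b : Set ℕ) := hbkey v hva
    have hvT : v ∈ T := by
      rcases hC1 hvC with h | h
      · exact absurd h hvb
      · exact h
    -- simplex facts in C
    have hvsing : ({v} : Finset ℕ) ∈ C.2 := by
      obtain ⟨u, hu, hvu⟩ := hCcov v hvC
      exact hCher {v} u (Finset.singleton_subset_iff.2 hvu) hu
    -- compute approx (m+1) C = g v
    have hstep : approx (m + 1) C = g v := by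
      show (↑(vrestrict C.1 (m + 1)), frestrict C.2 (vrestrict C.1 (m + 1)))
          = (insert v a.1, insert ({v} : Finset ℕ) a.2)
      have hv1 : vrestrict C.1 (m + 1) = insert v afin := vrestrict_succ C.1 m
      refine Prod.ext ?_ ?_
      · show (↑(vrestrict C.1 (m + 1)) : Set ℕ) = insert v a.1
        rw [hv1, Finset.coe_insert, hCa1]
      · show frestrict C.2 (vrestrict C.1 (m + 1)) = insert ({v} : Finset ℕ) a.2
        rw [hv1]
        refine Set.Subset.antisymm ?_ ?_
        · rintro w ⟨u, hu, rfl⟩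
          show u ∩ insert v afin ∈ insert ({v} : Finset ℕ) a.2
          by_cases hvu : v ∈ u
          · -- u must be {v}
            have huA : u ∈ A'.2 := hC2 hu
            have huv : u = {v} := by
              rcases huA with (h | h) | h
              · exact absurd (h.2 hvu) hvb
              · obtain ⟨x, _, rfl⟩ := h
                rw [Finset.mem_singleton] at hvu
                rw [hvu]
              · rw [Set.mem_singleton_iff] at h
                rw [h] at hvu
                simp at hvu
            rw [huv, Finset.singleton_inter_of_mem (Finset.mem_insert_self v afin)]
            exact Set.mem_insert _ _
          · rw [inter_insert_of_notMem' hvu]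
            refine Set.mem_insert_of_mem _ ?_
            rw [hCa2]
            exact ⟨u, hu, rfl⟩
        · rintro w (rfl | hw)
          · exact ⟨{v}, hvsing, Finset.singleton_inter_of_mem (Finset.mem_insert_self v afin)⟩
          · rw [hCa2] at hw
            obtain ⟨u, hu, rfl⟩ := hw
            refine ⟨u ∩ afin, hCher _ u Finset.inter_subset_left hu, ?_⟩
            show (u ∩ afin) ∩ insert v afin = u ∩ afin
            have : u ∩ afin ⊆ insert v afin :=
              Finset.Subset.trans Finset.inter_subset_right (Finset.subset_insert v afin)
            rw [Finset.inter_eq_left.2 this]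
    rw [← hm, hstep]
    exact hvT.2
  exact ⟨A', ⟨⟨hA'poly, hA'inf⟩, ⟨hA'1B, hA'2B⟩, n, happrox⟩,
    fun C hC D hD => (hmain C hC).trans (hmain D hD).symm⟩
end
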